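/- arXiv:1901.03152 — 6 statements merged into one kernel-verified Lean document; each statement's English description precedes it below -/
import Mathlib

section
/- Let G₁ and G₂ be arbitrary groups and H ≤ G₁ × G₂ a subgroup. Then there exist connected simple graphs Γ₁ and Γ₂ and a graph homomorphism φ : Γ₁ → Γ₂ such that Aut(Γ₁) ≅ G₁, Aut(Γ₂) ≅ G₂ and Aut(φ) ≅ H. -/
/-!
Both groups are first realised by labelled binary relational structures. `G₁` acts by left
translations on its Cayley structure, with an arc `a → a * b` labelled `b`. `G₂` acts on
`G₂ ⊔ (G₁ × G₂) ⧸ H`, which carries the Cayley structure of `G₂`, arcs `a → (g, a) H` labelled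
`g` that tie each coset to `G₂`, and arcs `(g, 1) • y → y` labelled `g` on the cosets. The map
`a ↦ (a⁻¹, 1) H` sends labelled arcs to labelled arcs, and a pair `(g, k)` of automorphisms
commutes with it exactly when `(a⁻¹, k) H = ((g * a)⁻¹, 1) H`, that is, when `(g, k) ∈ H`.

Labelled structures become digraphs by turning the labels into vertices, rigidly ordered by a
well-order, and digraphs become graphs by replacing each arc with an asymmetric gadget. Both
constructions are functorial and preserve the automorphism groups of objects and of morphisms,
so the lifted map between the two graphs still has automorphism group `H`.
-/

/-- The automorphism group of a binary relational system `R` over a label set `I`,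
as a subgroup of the permutations of the vertex set. -/
def relAut {I V : Type*} (R : I → V → V → Prop) : Subgroup (Equiv.Perm V) where
  carrier := {e | ∀ i v w, R i v w ↔ R i (e v) (e w)}
  one_mem' := by intro i v w; simp
  mul_mem' := by
    intro a b ha hb i v w
    simpa [Equiv.Perm.mul_apply] using (hb i v w).trans (ha i (b v) (b w))
  inv_mem' := by
    intro a ha i v w
    simpa [Equiv.Perm.coe_inv, Equiv.apply_symm_apply] using (ha i (a⁻¹ v) (a⁻¹ w)).symm

/-- The automorphism group of a morphism of binary relational systems, i.e. the subgroup of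
`Aut(R₁) × Aut(R₂)` of pairs commuting with `f`. -/
def relArrowAut {I V₁ V₂ : Type*} (R₁ : I → V₁ → V₁ → Prop) (R₂ : I → V₂ → V₂ → Prop)
    (f : V₁ → V₂) : Subgroup (relAut R₁ × relAut R₂) where
  carrier := {p | ∀ v, f ((p.1 : Equiv.Perm V₁) v) = (p.2 : Equiv.Perm V₂) (f v)}
  one_mem' := by intro v; simp
  mul_mem' := by
    intro a b ha hb v
    simp only [Prod.fst_mul, Prod.snd_mul, Subgroup.coe_mul, Equiv.Perm.mul_apply]
    rw [ha ((b.1 : Equiv.Perm V₁) v), hb v]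
  inv_mem' := by
    intro a ha v
    simp only [Prod.fst_inv, Prod.snd_inv, Subgroup.coe_inv]
    have h := ha ((a.1 : Equiv.Perm V₁)⁻¹ v)
    simp only [Equiv.Perm.coe_inv, Equiv.apply_symm_apply] at h
    rw [h, Equiv.Perm.eq_inv_iff_eq]; rfl

/-- The automorphism group of a simple graph, as a subgroup of the permutations of the
vertex set. -/
def graphAut {V : Type*} (G : SimpleGraph V) : Subgroup (Equiv.Perm V) where
  carrier := {e | ∀ v w, G.Adj v w ↔ G.Adj (e v) (e w)}
  one_mem' := by intro v w; simp
  mul_mem' := by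
    intro a b ha hb v w
    simpa [Equiv.Perm.mul_apply] using (hb v w).trans (ha (b v) (b w))
  inv_mem' := by
    intro a ha v w
    simpa [Equiv.Perm.coe_inv, Equiv.apply_symm_apply] using (ha (a⁻¹ v) (a⁻¹ w)).symm

/-- The automorphism group of a graph homomorphism, i.e. the subgroup of
`Aut(Γ₁) × Aut(Γ₂)` of pairs commuting with `f`. -/
def graphArrowAut {V₁ V₂ : Type*} (Γ₁ : SimpleGraph V₁) (Γ₂ : SimpleGraph V₂)
    (f : V₁ → V₂) : Subgroup (graphAut Γ₁ × graphAut Γ₂) where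
  carrier := {p | ∀ v, f ((p.1 : Equiv.Perm V₁) v) = (p.2 : Equiv.Perm V₂) (f v)}
  one_mem' := by intro v; simp
  mul_mem' := by
    intro a b ha hb v
    simp only [Prod.fst_mul, Prod.snd_mul, Subgroup.coe_mul, Equiv.Perm.mul_apply]
    rw [ha ((b.1 : Equiv.Perm V₁) v), hb v]
  inv_mem' := by
    intro a ha v
    simp only [Prod.fst_inv, Prod.snd_inv, Subgroup.coe_inv]
    have h := ha ((a.1 : Equiv.Perm V₁)⁻¹ v)
    simp only [Equiv.Perm.coe_inv, Equiv.apply_symm_apply] at h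
    rw [h, Equiv.Perm.eq_inv_iff_eq]; rfl

open Function Set

universe u

section Automorphisms

variable {V : Type*}

theorem mem_relAut_of_forall {I : Type*} {R : I → V → V → Prop} {e : Equiv.Perm V}
    (h : ∀ i v w, R i v w → R i (e v) (e w))
    (h' : ∀ i v w, R i v w → R i (e⁻¹ v) (e⁻¹ w)) : e ∈ relAut R :=
  fun i v w => ⟨h i v w, fun hvw => by simpa using h' i _ _ hvw⟩

theorem mem_graphAut_of_forall {G : SimpleGraph V} {e : Equiv.Perm V}
    (h : ∀ v w, G.Adj v w → G.Adj (e v) (e w))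
    (h' : ∀ v w, G.Adj v w → G.Adj (e⁻¹ v) (e⁻¹ w)) : e ∈ graphAut G :=
  fun v w => ⟨h v w, fun hvw => by simpa using h' _ _ hvw⟩

theorem neighborSet_apply_of_mem_graphAut {G : SimpleGraph V} {e : Equiv.Perm V}
    (he : e ∈ graphAut G) (v : V) : G.neighborSet (e v) = e '' G.neighborSet v := by
  ext w
  obtain ⟨w, rfl⟩ := e.surjective w
  simp [(he v w).symm]

theorem encard_neighborSet_apply_of_mem_graphAut {G : SimpleGraph V} {e : Equiv.Perm V}
    (he : e ∈ graphAut G) (v : V) :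
    (G.neighborSet (e v)).encard = (G.neighborSet v).encard := by
  rw [neighborSet_apply_of_mem_graphAut he, e.injective.encard_image]

abbrev digraphAut (A : V → V → Prop) : Subgroup (Equiv.Perm V) := relAut fun _ : Unit => A

theorem map_rel_iff_of_mem_digraphAut {A : V → V → Prop} {e : Equiv.Perm V}
    (he : e ∈ digraphAut A) {v w : V} : A (e v) (e w) ↔ A v w :=
  (he () v w).symm

theorem mem_graphAut_fromRel {A : V → V → Prop} {e : Equiv.Perm V} (he : e ∈ digraphAut A) :
    e ∈ graphAut (SimpleGraph.fromRel A) := fun v w => by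
  simp only [SimpleGraph.fromRel_adj, e.injective.ne_iff, he () v w, he () w v]

end Automorphisms

theorem Equiv.Perm.exists_semiconj_of_forall_mem_range_iff {α X : Type*} {f : α → X}
    (hf : Injective f) {e : Equiv.Perm X} (h : ∀ x, e x ∈ range f ↔ x ∈ range f) :
    ∃ σ : Equiv.Perm α, Semiconj f σ e :=
  ⟨(Equiv.ofInjective f hf).symm.permCongr (e.subtypePerm h), fun a => by
    simp [Equiv.permCongr_apply, Equiv.apply_ofInjective_symm]⟩

theorem Equiv.Perm.eq_one_of_map_rel_iff {L : Type*} {lt : L → L → Prop} [IsWellOrder L lt]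
    {τ : Equiv.Perm L} (h : ∀ l l', lt (τ l) (τ l') ↔ lt l l') : τ = 1 :=
  Equiv.ext fun l => InitialSeg.eq (RelIso.toInitialSeg ⟨τ, h _ _⟩) (InitialSeg.refl lt) l

theorem nonempty_mulEquiv_of_prodCongr_mem_iff {G₁ G₂ K₁ K₂ : Type*} [Group G₁] [Group G₂]
    [Group K₁] [Group K₂] (e₁ : G₁ ≃* K₁) (e₂ : G₂ ≃* K₂) {H : Subgroup (G₁ × G₂)}
    {S : Subgroup (K₁ × K₂)} (h : ∀ g k, (e₁ g, e₂ k) ∈ S ↔ (g, k) ∈ H) :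
    Nonempty (S ≃* H) := by
  have hS : H.map (e₁.prodCongr e₂).toMonoidHom = S := by
    ext ⟨x, y⟩
    rw [Subgroup.mem_map_equiv]
    change (e₁.symm x, e₂.symm y) ∈ H ↔ _
    rw [← h, e₁.apply_symm_apply, e₂.apply_symm_apply]
  exact ⟨(MulEquiv.subgroupCongr hS).symm.trans ((e₁.prodCongr e₂).subgroupMap H).symm⟩

namespace ArcGadget

variable {W : Type*} (A : W → W → Prop)

abbrev Arc : Type _ := {c : W × W // A c.1 c.2}

inductive Vert
  | base (u : W)
  | x (a : Arc A)
  | y (a : Arc A)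
  | z (a : Arc A)

inductive Edge : Vert A → Vert A → Prop
  | base_x (a : Arc A) : Edge (.base a.1.1) (.x a)
  | x_y (a : Arc A) : Edge (.x a) (.y a)
  | y_base (a : Arc A) : Edge (.y a) (.base a.1.2)
  | x_z (a : Arc A) : Edge (.x a) (.z a)

def graph : SimpleGraph (Vert A) where
  Adj v w := Edge A v w ∨ Edge A w v
  symm := ⟨fun _ _ => Or.symm⟩
  loopless := ⟨by rintro v (h | h) <;> cases h⟩

variable {A}

theorem graph_adj {v w : Vert A} : (graph A).Adj v w ↔ Edge A v w ∨ Edge A w v := Iff.rfl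

theorem neighborSet_z (a : Arc A) : (graph A).neighborSet (.z a) = {.x a} := by
  ext w
  rw [SimpleGraph.mem_neighborSet, graph_adj]
  constructor
  · rintro (h | h) <;> cases h
    rfl
  · rintro rfl
    exact .inr (.x_z a)

theorem neighborSet_y (a : Arc A) : (graph A).neighborSet (.y a) = {.x a, .base a.1.2} := by
  ext w
  rw [SimpleGraph.mem_neighborSet, graph_adj]
  constructor
  · rintro (h | h) <;> cases h <;> simp
  · rintro (rfl | rfl)
    exacts [.inr (.x_y a), .inl (.y_base a)]

theorem neighborSet_x (a : Arc A) :
    (graph A).neighborSet (.x a) = {.base a.1.1, .y a, .z a} := by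
  ext w
  rw [SimpleGraph.mem_neighborSet, graph_adj]
  constructor
  · rintro (h | h) <;> cases h <;> simp
  · rintro (rfl | rfl | rfl)
    exacts [.inr (.base_x a), .inl (.x_y a), .inl (.x_z a)]

theorem encard_neighborSet_z (a : Arc A) : ((graph A).neighborSet (.z a)).encard = 1 := by
  rw [neighborSet_z, encard_singleton]

theorem encard_neighborSet_y (a : Arc A) : ((graph A).neighborSet (.y a)).encard = 2 := by
  rw [neighborSet_y, encard_pair (by simp)]

theorem encard_neighborSet_x (a : Arc A) : ((graph A).neighborSet (.x a)).encard = 3 := by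
  rw [neighborSet_x, encard_eq_three]
  exact ⟨_, _, _, by simp, by simp, by simp, rfl⟩

def IsLeaf (v : Vert A) : Prop := ((graph A).neighborSet v).encard = 1

def IsCore (v : Vert A) : Prop :=
  2 < ((graph A).neighborSet v).encard ∧ ∀ w, (graph A).Adj v w → ¬ IsLeaf w

section Automorphism

variable {e : Equiv.Perm (Vert A)} (he : e ∈ graphAut (graph A))
include he

theorem isLeaf_apply_iff {v : Vert A} : IsLeaf (e v) ↔ IsLeaf v := by
  rw [IsLeaf, IsLeaf, encard_neighborSet_apply_of_mem_graphAut he]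

theorem isCore_apply_iff {v : Vert A} : IsCore (e v) ↔ IsCore v := by
  rw [IsCore, IsCore, encard_neighborSet_apply_of_mem_graphAut he, e.surjective.forall]
  simp only [← he v, isLeaf_apply_iff he]

end Automorphism

section Functoriality

variable {W₂ : Type*} {A₂ : W₂ → W₂ → Prop} (ψ : W → W₂)
  (hψ : ∀ u v, A u v → A₂ (ψ u) (ψ v))

def arcMap (a : Arc A) : Arc A₂ := ⟨(ψ a.1.1, ψ a.1.2), hψ _ _ a.2⟩

def map : Vert A → Vert A₂
  | .base u => .base (ψ u)
  | .x a => .x (arcMap ψ hψ a)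
  | .y a => .y (arcMap ψ hψ a)
  | .z a => .z (arcMap ψ hψ a)

theorem map_edge {v w : Vert A} (h : Edge A v w) : Edge A₂ (map ψ hψ v) (map ψ hψ w) := by
  cases h with
  | base_x a => exact .base_x (arcMap ψ hψ a)
  | x_y a => exact .x_y (arcMap ψ hψ a)
  | y_base a => exact .y_base (arcMap ψ hψ a)
  | x_z a => exact .x_z (arcMap ψ hψ a)

def hom : graph A →g graph A₂ where
  toFun := map ψ hψ
  map_rel' := Or.imp (map_edge ψ hψ) (map_edge ψ hψ)

end Functoriality

variable (A) in
def lift : digraphAut A →* graphAut (graph A) where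
  toFun σ := ⟨
    { toFun := map σ fun u v => (σ.2 () u v).1
      invFun := map ↑σ⁻¹ fun u v => ((σ⁻¹).2 () u v).1
      left_inv := by rintro (_ | _ | _ | _) <;> simp [map, arcMap]
      right_inv := by rintro (_ | _ | _ | _) <;> simp [map, arcMap] },
    mem_graphAut_of_forall (fun _ _ => (hom _ _).map_adj) (fun _ _ => (hom _ _).map_adj)⟩
  map_one' := Subtype.ext <| Equiv.ext <| by rintro (_ | _ | _ | _) <;> rfl
  map_mul' _ _ := Subtype.ext <| Equiv.ext <| by rintro (_ | _ | _ | _) <;> rfl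

theorem lift_injective : Injective (lift A) := fun _ _ h =>
  Subtype.ext <| Equiv.ext fun u =>
    Vert.base.inj (congrArg (fun e : graphAut (graph A) => e.1 (.base u)) h)

theorem lift_mem_graphArrowAut_iff {W₂ : Type*} {A₂ : W₂ → W₂ → Prop} (ψ : W → W₂)
    (hψ : ∀ u v, A u v → A₂ (ψ u) (ψ v)) (σ₁ : digraphAut A) (σ₂ : digraphAut A₂) :
    (lift A σ₁, lift A₂ σ₂) ∈ graphArrowAut (graph A) (graph A₂) (hom ψ hψ) ↔
      (σ₁, σ₂) ∈ relArrowAut (fun _ : Unit => A) (fun _ : Unit => A₂) ψ := by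
  refine ⟨fun h u => Vert.base.inj (h (.base u)), fun h => ?_⟩
  have harc (a : Arc A) : arcMap ψ hψ (arcMap σ₁ (fun u v => (σ₁.2 () u v).1) a) =
      arcMap σ₂ (fun u v => (σ₂.2 () u v).1) (arcMap ψ hψ a) :=
    Subtype.ext (Prod.ext (h _) (h _))
  rintro (u | a | a | a)
  · exact congrArg Vert.base (h u)
  · exact congrArg Vert.x (harc a)
  · exact congrArg Vert.y (harc a)
  · exact congrArg Vert.z (harc a)

theorem reachable_base_of_arc (a : Arc A) :
    (graph A).Reachable (.base a.1.1) (.base a.1.2) :=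
  (SimpleGraph.Adj.reachable (Or.inl (.base_x a))).trans <|
    (SimpleGraph.Adj.reachable (Or.inl (.x_y a))).trans
      (SimpleGraph.Adj.reachable (Or.inl (.y_base a)))

theorem connected_graph (h : (SimpleGraph.fromRel A).Connected) : (graph A).Connected := by
  have hbase (u v : W) : (graph A).Reachable (.base u) (.base v) := by
    have huv := (SimpleGraph.reachable_iff_reflTransGen u v).1 (h.preconnected u v)
    refine (SimpleGraph.reachable_iff_reflTransGen _ _).2 (huv.lift' Vert.base ?_)
    rintro u v ⟨-, huv | huv⟩ <;> refine (SimpleGraph.reachable_iff_reflTransGen _ _).1 ?_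
    exacts [reachable_base_of_arc ⟨(u, v), huv⟩, (reachable_base_of_arc ⟨(v, u), huv⟩).symm]
  have hx (a : Arc A) : (graph A).Reachable (.x a) (.base a.1.1) :=
    SimpleGraph.Adj.reachable (Or.inr (.base_x a))
  have hreach (v : Vert A) : ∃ u, (graph A).Reachable v (.base u) := by
    rcases v with u | a | a | a
    · exact ⟨u, .rfl⟩
    · exact ⟨_, hx a⟩
    · exact ⟨_, (SimpleGraph.Adj.reachable (Or.inr (.x_y a))).trans (hx a)⟩
    · exact ⟨_, (SimpleGraph.Adj.reachable (Or.inr (.x_z a))).trans (hx a)⟩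
  refine (SimpleGraph.connected_iff _).2 ⟨fun v w => ?_, h.nonempty.map .base⟩
  obtain ⟨u, hu⟩ := hreach v
  obtain ⟨u', hu'⟩ := hreach w
  exact hu.trans ((hbase u u').trans hu'.symm)

section Rigidity

variable (hdeg : ∀ u, 2 < ((SimpleGraph.fromRel A).neighborSet u).encard)
include hdeg

theorem two_lt_encard_neighborSet_base (u : W) :
    2 < ((graph A).neighborSet (.base u)).encard := by
  let other : Vert A → W
    | .x a => a.1.2
    | .y a => a.1.1
    | _ => u
  have hsub : (SimpleGraph.fromRel A).neighborSet u ⊆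
      other '' (graph A).neighborSet (.base u) := by
    rintro n ⟨-, h | h⟩
    exacts [⟨_, Or.inl (.base_x ⟨(u, n), h⟩), rfl⟩, ⟨_, Or.inr (.y_base ⟨(n, u), h⟩), rfl⟩]
  exact (hdeg u).trans_le ((encard_le_encard hsub).trans (encard_image_le _ _))

theorem isLeaf_iff {v : Vert A} : IsLeaf v ↔ v ∈ range Vert.z := by
  cases v with
  | base u =>
    simpa [IsLeaf] using (lt_trans (by norm_num) (two_lt_encard_neighborSet_base hdeg u)).ne'
  | x a => simp [IsLeaf, encard_neighborSet_x]
  | y a => simp [IsLeaf, encard_neighborSet_y]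
  | z a => simp [IsLeaf, encard_neighborSet_z]

theorem isCore_iff {v : Vert A} : IsCore v ↔ v ∈ range Vert.base := by
  cases v with
  | base u =>
    refine iff_of_true ⟨two_lt_encard_neighborSet_base hdeg u, ?_⟩ (mem_range_self u)
    rintro w (h | h) <;> cases h <;> simp [isLeaf_iff hdeg]
  | x a => simpa [IsCore] using fun _ => ⟨.z a, Or.inl (.x_z a), encard_neighborSet_z a⟩
  | y a => simp [IsCore, encard_neighborSet_y]
  | z a => simp [IsCore, encard_neighborSet_z]

theorem exists_semiconj_base {e : Equiv.Perm (Vert A)} (he : e ∈ graphAut (graph A)) :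
    ∃ σ : Equiv.Perm W, Semiconj Vert.base σ e :=
  Equiv.Perm.exists_semiconj_of_forall_mem_range_iff (fun _ _ h => Vert.base.inj h) fun v => by
    rw [← isCore_iff hdeg, ← isCore_iff hdeg, isCore_apply_iff he]

/-- The pendant `z` is the only leaf of a gadget; the path `x – y` and the endpoints of the arc
are then recovered from adjacencies. -/
theorem exists_arc_apply {e : Equiv.Perm (Vert A)} (he : e ∈ graphAut (graph A)) {σ : W → W}
    (hσ : Semiconj Vert.base σ e) (a : Arc A) :
    ∃ b : Arc A, b.1 = (σ a.1.1, σ a.1.2) ∧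
      e (.x a) = .x b ∧ e (.y a) = .y b ∧ e (.z a) = .z b := by
  obtain ⟨b, hz⟩ : e (.z a) ∈ range Vert.z :=
    (isLeaf_iff hdeg).1 ((isLeaf_apply_iff he).2 (encard_neighborSet_z a))
  have hx : e (.x a) = .x b := by
    have h : e (.x a) ∈ (graph A).neighborSet (.z b) := hz ▸ (he _ _).1 (Or.inr (.x_z a))
    rwa [neighborSet_z] at h
  have h₁ : σ a.1.1 = b.1.1 := by
    have h : e (.base a.1.1) ∈ (graph A).neighborSet (.x b) :=
      hx ▸ (he _ _).1 (Or.inr (.base_x a))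
    simpa [neighborSet_x, ← hσ a.1.1] using h
  have hy : e (.y a) = .y b := by
    have h : e (.y a) ∈ (graph A).neighborSet (.x b) := hx ▸ (he _ _).1 (Or.inl (.x_y a))
    rw [neighborSet_x] at h
    rcases h with h | h | h
    · rw [← h₁, hσ] at h
      simpa using e.injective h
    · exact h
    · rw [hz] at h
      simpa using e.injective h
  have h₂ : σ a.1.2 = b.1.2 := by
    have h : e (.base a.1.2) ∈ (graph A).neighborSet (.y b) :=
      hy ▸ (he _ _).1 (Or.inl (.y_base a))
    simpa [neighborSet_y, ← hσ a.1.2] using h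
  exact ⟨b, Prod.ext h₁.symm h₂.symm, hx, hy, hz.symm⟩

theorem lift_surjective : Surjective (lift A) := by
  rintro ⟨e, he⟩
  obtain ⟨σ, hσ⟩ := exists_semiconj_base hdeg he
  have hσ' : Semiconj Vert.base ⇑(σ⁻¹ : Equiv.Perm W) ⇑(e⁻¹ : Equiv.Perm (Vert A)) :=
    hσ.inverses_right σ.apply_symm_apply e.symm_apply_apply
  have hmem : σ ∈ digraphAut A := by
    refine mem_relAut_of_forall (fun _ u v huv => ?_) (fun _ u v huv => ?_)
    · obtain ⟨b, hb, -⟩ := exists_arc_apply hdeg he hσ ⟨(u, v), huv⟩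
      simpa [hb] using b.2
    · obtain ⟨b, hb, -⟩ := exists_arc_apply hdeg (inv_mem he) hσ' ⟨(u, v), huv⟩
      simpa [hb] using b.2
  refine ⟨⟨σ, hmem⟩, Subtype.ext <| Equiv.ext ?_⟩
  rintro (u | a | a | a)
  · exact hσ u
  all_goals
    obtain ⟨b, hb, hx, hy, hz⟩ := exists_arc_apply hdeg he hσ a
    have hab : arcMap σ (fun u v => (hmem () u v).1) a = b := Subtype.ext hb.symm
    simp only [hx, hy, hz, ← hab]
    rfl

noncomputable def liftEquiv : digraphAut A ≃* graphAut (graph A) :=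
  MulEquiv.ofBijective (lift A) ⟨lift_injective, lift_surjective hdeg⟩

end Rigidity

end ArcGadget

namespace LabelGadget

variable {L V : Type*} (lt : L → L → Prop) (R : L → V → V → Prop)

abbrev Triple : Type _ := {t : L × V × V // R t.1 t.2.1 t.2.2}

inductive Vert
  | elt (a : V)
  | label (l : L)
  | p (t : Triple R)
  | q (t : Triple R)

inductive Adj : Vert R → Vert R → Prop
  | elt_label (a : V) (l : L) : Adj (.elt a) (.label l)
  | label_label {l l' : L} : lt l l' → Adj (.label l) (.label l')
  | elt_p (t : Triple R) : Adj (.elt t.1.2.1) (.p t)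
  | label_p (t : Triple R) : Adj (.label t.1.1) (.p t)
  | p_q (t : Triple R) : Adj (.p t) (.q t)
  | q_elt (t : Triple R) : Adj (.q t) (.elt t.1.2.2)
  | q_label (t : Triple R) : Adj (.q t) (.label t.1.1)

/- Elements are hubs with no hub among their in-neighbours, labels are hubs with one, and the
vertices `p`, `q` of a triple are not hubs: this is how automorphisms are seen to preserve the
kind of a vertex. -/

def IsHub (v : Vert R) : Prop := ((SimpleGraph.fromRel (Adj lt R)).neighborSet v).Infinite

def HasHubInNbr (v : Vert R) : Prop := ∃ w, IsHub lt R w ∧ Adj lt R w v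

variable {lt R}

theorem adj_label_label_iff {l l' : L} : Adj lt R (.label l) (.label l') ↔ lt l l' :=
  ⟨by rintro ⟨⟩; assumption, .label_label⟩

theorem adj_elt_iff {a : V} {w : Vert R} :
    Adj lt R (.elt a) w ↔ w ∈ range Vert.label ∨ ∃ t, w = .p t ∧ t.1.2.1 = a := by
  constructor
  · rintro ⟨⟩
    exacts [.inl (mem_range_self _), .inr ⟨_, rfl, rfl⟩]
  · rintro (⟨l, rfl⟩ | ⟨t, rfl, rfl⟩)
    exacts [.elt_label a l, .elt_p t]

theorem adj_label_p_iff {l : L} {t : Triple R} : Adj lt R (.label l) (.p t) ↔ t.1.1 = l :=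
  ⟨by rintro ⟨⟩; rfl, by rintro rfl; exact .label_p t⟩

theorem adj_p_iff {t : Triple R} {w : Vert R} : Adj lt R (.p t) w ↔ w = .q t :=
  ⟨by rintro ⟨⟩; rfl, by rintro rfl; exact .p_q t⟩

theorem adj_q_elt_iff {t : Triple R} {c : V} : Adj lt R (.q t) (.elt c) ↔ t.1.2.2 = c :=
  ⟨by rintro ⟨⟩; rfl, by rintro rfl; exact .q_elt t⟩

section Classification

theorem isHub_elt [Infinite L] (a : V) : IsHub lt R (.elt a) :=
  infinite_of_injective_forall_mem (fun _ _ h => Vert.label.inj h) fun l =>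
    ⟨by simp, Or.inl (.elt_label a l)⟩

theorem isHub_label [Infinite L] [Std.Trichotomous lt] (l : L) : IsHub lt R (.label l) := by
  refine (((finite_singleton l).infinite_compl).image fun _ _ _ _ h => Vert.label.inj h).mono ?_
  rintro _ ⟨l', hl' : l' ≠ l, rfl⟩
  refine ⟨by simpa using hl'.symm, ?_⟩
  rcases trichotomous_of lt l l' with h | h | h
  exacts [Or.inl (.label_label h), absurd h.symm hl', Or.inr (.label_label h)]

theorem not_isHub_p (t : Triple R) : ¬ IsHub lt R (.p t) := fun h =>
  h <| (toFinite {.elt t.1.2.1, .label t.1.1, .q t}).subset <| by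
    rintro w ⟨-, h | h⟩ <;> cases h <;> simp

theorem not_isHub_q (t : Triple R) : ¬ IsHub lt R (.q t) := fun h =>
  h <| (toFinite {.p t, .elt t.1.2.2, .label t.1.1}).subset <| by
    rintro w ⟨-, h | h⟩ <;> cases h <;> simp

theorem not_hasHubInNbr_elt (a : V) : ¬ HasHubInNbr lt R (.elt a) := by
  rintro ⟨w, hw, h⟩
  cases h
  exact not_isHub_q _ hw

theorem hasHubInNbr_label [Infinite L] [Nonempty V] (l : L) : HasHubInNbr lt R (.label l) :=
  ⟨_, isHub_elt (Classical.arbitrary V), .elt_label _ l⟩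

variable [Infinite L] [Std.Trichotomous lt] [Nonempty V]

variable (lt) in
theorem mem_range_elt_iff {v : Vert R} :
    v ∈ range Vert.elt ↔ IsHub lt R v ∧ ¬ HasHubInNbr lt R v := by
  cases v <;> simp [isHub_elt, not_hasHubInNbr_elt, isHub_label, hasHubInNbr_label,
    not_isHub_p, not_isHub_q]

variable (lt) in
theorem mem_range_label_iff {v : Vert R} :
    v ∈ range Vert.label ↔ IsHub lt R v ∧ HasHubInNbr lt R v := by
  cases v <;> simp [isHub_elt, not_hasHubInNbr_elt, isHub_label, hasHubInNbr_label,
    not_isHub_p, not_isHub_q]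

end Classification

theorem two_lt_encard_neighborSet [Infinite L] [Std.Trichotomous lt] (v : Vert R) :
    2 < ((SimpleGraph.fromRel (Adj lt R)).neighborSet v).encard := by
  have three (a b c : Vert R) (hab : a ≠ b) (hac : a ≠ c) (hbc : b ≠ c)
      (h : {a, b, c} ⊆ (SimpleGraph.fromRel (Adj lt R)).neighborSet v) :
      2 < ((SimpleGraph.fromRel (Adj lt R)).neighborSet v).encard :=
    calc 2 < ({a, b, c} : Set (Vert R)).encard := by
          rw [encard_eq_three.2 ⟨a, b, c, hab, hac, hbc, rfl⟩]; norm_num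
      _ ≤ _ := encard_le_encard h
  cases v with
  | elt a => rw [(isHub_elt a).encard_eq]; decide
  | label l => rw [(isHub_label l).encard_eq]; decide
  | p t =>
    refine three (.elt t.1.2.1) (.label t.1.1) (.q t) (by simp) (by simp) (by simp) ?_
    rintro _ (rfl | rfl | rfl)
    exacts [⟨by simp, .inr (.elt_p t)⟩, ⟨by simp, .inr (.label_p t)⟩, ⟨by simp, .inl (.p_q t)⟩]
  | q t =>
    refine three (.p t) (.elt t.1.2.2) (.label t.1.1) (by simp) (by simp) (by simp) ?_
    rintro _ (rfl | rfl | rfl)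
    exacts [⟨by simp, .inr (.p_q t)⟩, ⟨by simp, .inl (.q_elt t)⟩, ⟨by simp, .inl (.q_label t)⟩]

theorem connected_fromRel [Nonempty L] [Std.Trichotomous lt] :
    (SimpleGraph.fromRel (Adj lt R)).Connected := by
  have hlabel (l l' : L) :
      (SimpleGraph.fromRel (Adj lt R)).Reachable (.label l) (.label l') := by
    by_cases hll : l = l'
    · rw [hll]
    refine SimpleGraph.Adj.reachable ⟨by simpa using hll, ?_⟩
    rcases trichotomous_of lt l l' with h | h | h
    exacts [.inl (.label_label h), absurd h hll, .inr (.label_label h)]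
  have hreach (v : Vert R) : ∃ l, (SimpleGraph.fromRel (Adj lt R)).Reachable v (.label l) := by
    cases v with
    | elt a =>
      exact ⟨Classical.arbitrary L, SimpleGraph.Adj.reachable ⟨by simp, .inl (.elt_label _ _)⟩⟩
    | label l => exact ⟨l, .rfl⟩
    | p t => exact ⟨_, SimpleGraph.Adj.reachable ⟨by simp, .inr (.label_p t)⟩⟩
    | q t => exact ⟨_, SimpleGraph.Adj.reachable ⟨by simp, .inl (.q_label t)⟩⟩
  refine (SimpleGraph.connected_iff _).2 ⟨fun v w => ?_, ⟨.label (Classical.arbitrary L)⟩⟩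
  obtain ⟨l, hl⟩ := hreach v
  obtain ⟨l', hl'⟩ := hreach w
  exact hl.trans ((hlabel l l').trans hl'.symm)

section Automorphism

variable {e : Equiv.Perm (Vert R)} (he : e ∈ digraphAut (Adj lt R))
include he

theorem isHub_apply_iff {v : Vert R} : IsHub lt R (e v) ↔ IsHub lt R v := by
  rw [IsHub, IsHub, neighborSet_apply_of_mem_graphAut (mem_graphAut_fromRel he),
    infinite_image_iff e.injective.injOn]

theorem hasHubInNbr_apply_iff {v : Vert R} : HasHubInNbr lt R (e v) ↔ HasHubInNbr lt R v := by
  rw [HasHubInNbr, HasHubInNbr, e.surjective.exists]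
  simp only [isHub_apply_iff he, map_rel_iff_of_mem_digraphAut he]

end Automorphism

section Functoriality

variable {V₂ : Type*} {R₂ : L → V₂ → V₂ → Prop} (f : V → V₂)
  (hf : ∀ l a c, R l a c → R₂ l (f a) (f c))

def tripleMap (t : Triple R) : Triple R₂ := ⟨(t.1.1, f t.1.2.1, f t.1.2.2), hf _ _ _ t.2⟩

def map : Vert R → Vert R₂
  | .elt a => .elt (f a)
  | .label l => .label l
  | .p t => .p (tripleMap f hf t)
  | .q t => .q (tripleMap f hf t)

theorem map_adj {v w : Vert R} (h : Adj lt R v w) : Adj lt R₂ (map f hf v) (map f hf w) := by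
  cases h with
  | elt_label a l => exact .elt_label (f a) l
  | label_label h => exact .label_label h
  | elt_p t => exact .elt_p (tripleMap f hf t)
  | label_p t => exact .label_p (tripleMap f hf t)
  | p_q t => exact .p_q (tripleMap f hf t)
  | q_elt t => exact .q_elt (tripleMap f hf t)
  | q_label t => exact .q_label (tripleMap f hf t)

end Functoriality

variable (lt R) in
def lift : relAut R →* digraphAut (Adj lt R) where
  toFun σ := ⟨
    { toFun := map σ fun l a c => (σ.2 l a c).1
      invFun := map ↑σ⁻¹ fun l a c => ((σ⁻¹).2 l a c).1
      left_inv := by rintro (_ | _ | _ | _) <;> simp [map, tripleMap]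
      right_inv := by rintro (_ | _ | _ | _) <;> simp [map, tripleMap] },
    mem_relAut_of_forall (fun _ _ _ => map_adj _ _) (fun _ _ _ => map_adj _ _)⟩
  map_one' := Subtype.ext <| Equiv.ext <| by rintro (_ | _ | _ | _) <;> rfl
  map_mul' _ _ := Subtype.ext <| Equiv.ext <| by rintro (_ | _ | _ | _) <;> rfl

theorem lift_injective : Injective (lift lt R) := fun _ _ h =>
  Subtype.ext <| Equiv.ext fun a =>
    Vert.elt.inj (congrArg (fun e : digraphAut (Adj lt R) => e.1 (.elt a)) h)

theorem lift_mem_relArrowAut_iff {V₂ : Type*} {R₂ : L → V₂ → V₂ → Prop} (f : V → V₂)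
    (hf : ∀ l a c, R l a c → R₂ l (f a) (f c)) (σ₁ : relAut R) (σ₂ : relAut R₂) :
    (lift lt R σ₁, lift lt R₂ σ₂) ∈
        relArrowAut (fun _ : Unit => Adj lt R) (fun _ : Unit => Adj lt R₂) (map f hf) ↔
      (σ₁, σ₂) ∈ relArrowAut R R₂ f := by
  refine ⟨fun h a => Vert.elt.inj (h (.elt a)), fun h => ?_⟩
  have htriple (t : Triple R) :
      tripleMap f hf (tripleMap σ₁ (fun l a c => (σ₁.2 l a c).1) t) =
        tripleMap σ₂ (fun l a c => (σ₂.2 l a c).1) (tripleMap f hf t) :=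
    Subtype.ext (Prod.ext rfl (Prod.ext (h _) (h _)))
  rintro (a | l | t | t)
  · exact congrArg Vert.elt (h a)
  · rfl
  · exact congrArg Vert.p (htriple t)
  · exact congrArg Vert.q (htriple t)

variable (lt R) in
def graph : SimpleGraph (ArcGadget.Vert (Adj lt R)) := ArcGadget.graph (Adj lt R)

theorem connected_graph [Nonempty L] [Std.Trichotomous lt] : (graph lt R).Connected :=
  ArcGadget.connected_graph connected_fromRel

variable (lt) in
def graphHom {V₂ : Type*} {R₂ : L → V₂ → V₂ → Prop} (f : V → V₂)
    (hf : ∀ l a c, R l a c → R₂ l (f a) (f c)) : graph lt R →g graph lt R₂ :=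
  ArcGadget.hom (map f hf) fun _ _ => map_adj f hf

section Rigidity

variable [IsWellOrder L lt] [Infinite L] [Nonempty V]

theorem exists_semiconj_elt {e : Equiv.Perm (Vert R)} (he : e ∈ digraphAut (Adj lt R)) :
    ∃ σ : Equiv.Perm V, Semiconj Vert.elt σ e :=
  Equiv.Perm.exists_semiconj_of_forall_mem_range_iff (fun _ _ h => Vert.elt.inj h) fun v => by
    rw [mem_range_elt_iff lt, mem_range_elt_iff lt, isHub_apply_iff he, hasHubInNbr_apply_iff he]

/-- Automorphisms permute the label vertices compatibly with the well-order, which has no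
nontrivial automorphism. -/
theorem apply_label {e : Equiv.Perm (Vert R)} (he : e ∈ digraphAut (Adj lt R)) (l : L) :
    e (.label l) = .label l := by
  obtain ⟨τ, hτ⟩ := Equiv.Perm.exists_semiconj_of_forall_mem_range_iff
    (f := (Vert.label : L → Vert R)) (fun _ _ h => Vert.label.inj h) fun v => by
      rw [mem_range_label_iff lt, mem_range_label_iff lt, isHub_apply_iff he,
        hasHubInNbr_apply_iff he]
  have hτ1 : τ = 1 := Equiv.Perm.eq_one_of_map_rel_iff (lt := lt) fun l l' => by
    rw [← adj_label_label_iff (lt := lt) (R := R), hτ, hτ, map_rel_iff_of_mem_digraphAut he,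
      adj_label_label_iff]
  rw [← hτ, hτ1]
  rfl

theorem exists_triple_apply {e : Equiv.Perm (Vert R)} (he : e ∈ digraphAut (Adj lt R))
    {σ : V → V} (hσ : Semiconj Vert.elt σ e) (t : Triple R) :
    ∃ t' : Triple R, t'.1 = (t.1.1, σ t.1.2.1, σ t.1.2.2) ∧
      e (.p t) = .p t' ∧ e (.q t) = .q t' := by
  obtain ⟨t', hp, ht'₂⟩ : ∃ t', e (.p t) = .p t' ∧ t'.1.2.1 = σ t.1.2.1 := by
    have h := (he () _ _).1 (Adj.elt_p t)
    rw [← hσ] at h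
    rcases adj_elt_iff.1 h with ⟨l, hl⟩ | h
    · rw [← apply_label he l] at hl
      simpa using e.injective hl
    · exact h
  have ht'₁ : t'.1.1 = t.1.1 := by
    have h := (he () _ _).1 (Adj.label_p t)
    rwa [apply_label he, hp, adj_label_p_iff] at h
  have hq : e (.q t) = .q t' := by
    have h := (he () _ _).1 (Adj.p_q t)
    rwa [hp, adj_p_iff] at h
  have ht'₃ : t'.1.2.2 = σ t.1.2.2 := by
    have h := (he () _ _).1 (Adj.q_elt t)
    rwa [hq, ← hσ, adj_q_elt_iff] at h
  exact ⟨t', Prod.ext ht'₁ (Prod.ext ht'₂ ht'₃), hp, hq⟩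

theorem lift_surjective : Surjective (lift lt R) := by
  rintro ⟨e, he⟩
  obtain ⟨σ, hσ⟩ := exists_semiconj_elt he
  have hσ' : Semiconj Vert.elt ⇑(σ⁻¹ : Equiv.Perm V) ⇑(e⁻¹ : Equiv.Perm (Vert R)) :=
    hσ.inverses_right σ.apply_symm_apply e.symm_apply_apply
  have hmem : σ ∈ relAut R := by
    refine mem_relAut_of_forall (fun l a c h => ?_) (fun l a c h => ?_)
    · obtain ⟨t', ht', -⟩ := exists_triple_apply he hσ ⟨(l, a, c), h⟩
      simpa [ht'] using t'.2
    · obtain ⟨t', ht', -⟩ := exists_triple_apply (inv_mem he) hσ' ⟨(l, a, c), h⟩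
      simpa [ht'] using t'.2
  refine ⟨⟨σ, hmem⟩, Subtype.ext <| Equiv.ext ?_⟩
  rintro (a | l | t | t)
  · exact hσ a
  · exact (apply_label he l).symm
  all_goals
    obtain ⟨t', ht', hp, hq⟩ := exists_triple_apply he hσ t
    have htt' : tripleMap σ (fun l a c => (hmem l a c).1) t = t' := Subtype.ext ht'.symm
    simp only [hp, hq, ← htt']
    rfl

noncomputable def liftEquiv : relAut R ≃* digraphAut (Adj lt R) :=
  MulEquiv.ofBijective (lift lt R) ⟨lift_injective, lift_surjective⟩

variable (lt R) in
noncomputable def graphAutEquiv : relAut R ≃* graphAut (graph lt R) :=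
  liftEquiv.trans (ArcGadget.liftEquiv two_lt_encard_neighborSet)

theorem graphAutEquiv_mem_graphArrowAut_iff {V₂ : Type*} [Nonempty V₂]
    {R₂ : L → V₂ → V₂ → Prop} (f : V → V₂) (hf : ∀ l a c, R l a c → R₂ l (f a) (f c))
    (σ₁ : relAut R) (σ₂ : relAut R₂) :
    (graphAutEquiv lt R σ₁, graphAutEquiv lt R₂ σ₂) ∈
        graphArrowAut (graph lt R) (graph lt R₂) (graphHom lt f hf) ↔
      (σ₁, σ₂) ∈ relArrowAut R R₂ f :=
  (ArcGadget.lift_mem_graphArrowAut_iff _ _ _ _).trans (lift_mem_relArrowAut_iff f hf σ₁ σ₂)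

end Rigidity

end LabelGadget

section Cayley

variable {G L : Type*} [Group G]

def cayleySystem (ι : G → L) : L → G → G → Prop := fun l a c => l = ι (a⁻¹ * c)

variable (ι : G → L)

def cayleyHom : G →* relAut (cayleySystem ι) :=
  (MulAction.toPermHom G G).codRestrict _ fun g l a c => by simp [cayleySystem, mul_assoc]

theorem cayleyHom_apply (g a : G) : (cayleyHom ι g : Equiv.Perm G) a = g * a := rfl

theorem cayleyHom_bijective (hι : Injective ι) : Bijective (cayleyHom ι) := by
  refine ⟨fun g g' h => ?_, fun σ => ⟨σ.1 1, Subtype.ext <| Equiv.ext fun a => ?_⟩⟩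
  · simpa [cayleyHom_apply] using congrArg (fun σ : relAut (cayleySystem ι) => σ.1 1) h
  · have h : ι a = ι ((σ.1 1)⁻¹ * σ.1 a) := (σ.2 (ι a) 1 a).1 (by simp [cayleySystem])
    exact eq_inv_mul_iff_mul_eq.1 (hι h)

end Cayley

section Coset

variable {G₁ G₂ : Type u} [Group G₁] [Group G₂] (H : Subgroup (G₁ × G₂))

/-- The summand `ℕ` only makes the set of labels infinite, as the label gadget requires. -/
abbrev Label (G₁ G₂ : Type u) : Type u := G₁ ⊕ G₂ ⊕ ULift.{u} ℕ

def cosetSystem : Label G₁ G₂ → G₂ ⊕ (G₁ × G₂) ⧸ H → G₂ ⊕ (G₁ × G₂) ⧸ H → Prop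
  | l, .inl a, .inl c => l = .inr (.inl (a⁻¹ * c))
  | l, .inl a, .inr x => ∃ g, l = .inl g ∧ x = QuotientGroup.mk (g, a)
  | l, .inr x, .inr y => ∃ g, l = .inl g ∧ x = ((g, 1) : G₁ × G₂) • y
  | _, .inr _, .inl _ => False

def cosetAction : G₂ →* Equiv.Perm (G₂ ⊕ (G₁ × G₂) ⧸ H) :=
  (Equiv.Perm.sumCongrHom _ _).comp <| (MulAction.toPermHom G₂ G₂).prod <|
    (MulAction.toPermHom (G₁ × G₂) _).comp (MonoidHom.inr G₁ G₂)

theorem cosetAction_inl (k a : G₂) : cosetAction H k (.inl a) = .inl (k * a) := rfl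

theorem cosetAction_inr (k : G₂) (x : (G₁ × G₂) ⧸ H) :
    cosetAction H k (.inr x) = .inr (((1, k) : G₁ × G₂) • x) := rfl

theorem cosetAction_mem (k : G₂) : cosetAction H k ∈ relAut (cosetSystem H) := by
  rintro l (a | x) (c | y)
  · simp [cosetAction_inl, cosetSystem, mul_assoc]
  · have hmk (g : G₁) : (QuotientGroup.mk (g, k * a) : (G₁ × G₂) ⧸ H) =
        ((1, k) : G₁ × G₂) • QuotientGroup.mk (g, a) := by
      rw [MulAction.Quotient.smul_mk]
      simp
    simp only [cosetAction_inl, cosetAction_inr, cosetSystem, hmk, smul_left_cancel_iff]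
  · simp [cosetAction_inl, cosetAction_inr, cosetSystem]
  · have hcomm (g : G₁) : ((g, 1) : G₁ × G₂) • ((1, k) : G₁ × G₂) • y =
        ((1, k) : G₁ × G₂) • ((g, 1) : G₁ × G₂) • y := by
      rw [smul_smul, smul_smul]
      congr 1
      ext <;> simp
    simp only [cosetAction_inr, cosetSystem, hcomm, smul_left_cancel_iff]

def cosetHom : G₂ →* relAut (cosetSystem H) :=
  (cosetAction H).codRestrict _ (cosetAction_mem H)

theorem cosetHom_injective : Injective (cosetHom H) := fun k k' h => by
  simpa [cosetHom, cosetAction_inl] using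
    congrArg (fun σ : relAut (cosetSystem H) => σ.1 (.inl 1)) h

theorem exists_apply_inl_eq_mul (σ : relAut (cosetSystem H)) :
    ∃ k, ∀ a, σ.1 (.inl a) = .inl (k * a) := by
  have hinl (a : G₂) : ∃ c, σ.1 (.inl a) = .inl c := by
    have h := (σ.2 (.inr (.inl 1)) (.inl a) (.inl a)).1 (by simp [cosetSystem])
    rcases hσa : σ.1 (.inl a) with c | x
    · exact ⟨c, rfl⟩
    · simp [hσa, cosetSystem] at h
  choose f hf using hinl
  refine ⟨f 1, fun a => ?_⟩
  have h := (σ.2 (.inr (.inl a)) (.inl 1) (.inl a)).1 (by simp [cosetSystem])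
  rw [hf, hf] at h
  simp only [cosetSystem, Sum.inr.injEq, Sum.inl.injEq] at h
  rw [hf, ← eq_inv_mul_iff_mul_eq.1 h]

theorem cosetHom_surjective : Surjective (cosetHom H) := by
  intro σ
  obtain ⟨k, hk⟩ := exists_apply_inl_eq_mul H σ
  refine ⟨k, Subtype.ext <| Equiv.ext ?_⟩
  rintro (a | x)
  · exact (hk a).symm
  obtain ⟨⟨g, b⟩, rfl⟩ := QuotientGroup.mk_surjective x
  have h := (σ.2 (.inl g) (.inl b) (.inr (QuotientGroup.mk (g, b)))).1 ⟨g, rfl, rfl⟩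
  rw [hk] at h
  rcases hσx : σ.1 (.inr (QuotientGroup.mk (g, b))) with c | y
  · simp [hσx, cosetSystem] at h
  · rw [hσx] at h
    obtain ⟨g', hg', rfl⟩ := h
    obtain rfl := Sum.inl.inj hg'
    show cosetAction H k _ = _
    rw [cosetAction_inr, MulAction.Quotient.smul_mk]
    simp

def cosetEmbedding (a : G₁) : G₂ ⊕ (G₁ × G₂) ⧸ H := .inr (QuotientGroup.mk (a⁻¹, 1))

theorem cosetEmbedding_rel (l : Label G₁ G₂) (a c : G₁) (h : cayleySystem Sum.inl l a c) :
    cosetSystem H l (cosetEmbedding H a) (cosetEmbedding H c) := by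
  refine ⟨a⁻¹ * c, h, ?_⟩
  rw [MulAction.Quotient.smul_mk]
  simp

theorem cayleyHom_cosetHom_mem_relArrowAut_iff (g : G₁) (k : G₂) :
    (cayleyHom Sum.inl g, cosetHom H k) ∈
        relArrowAut (cayleySystem (Sum.inl : G₁ → Label G₁ G₂)) (cosetSystem H)
          (cosetEmbedding H) ↔
      (g, k) ∈ H := by
  have key (a : G₁) :
      cosetEmbedding H (g * a) = cosetAction H k (cosetEmbedding H a) ↔ (g, k) ∈ H := by
    rw [cosetEmbedding, cosetEmbedding, cosetAction_inr, MulAction.Quotient.smul_mk,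
      Sum.inr.injEq, QuotientGroup.eq]
    simp [mul_assoc]
  exact (forall_congr' key).trans (forall_const G₁)

end Coset

/-- **Realisability in the arrow category of graphs.**
For arbitrary groups `G₁`, `G₂` and any subgroup `H ≤ G₁ × G₂`, there exist connected simple
graphs `Γ₁`, `Γ₂` and a graph homomorphism `φ : Γ₁ → Γ₂` with `Aut(Γ₁) ≅ G₁`,
`Aut(Γ₂) ≅ G₂` and `Aut(φ) ≅ H`. -/
theorem arrow_realisability_in_graphs (G₁ G₂ : Type u) [Group G₁] [Group G₂]
    (H : Subgroup (G₁ × G₂)) :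
    ∃ (V₁ V₂ : Type u) (Γ₁ : SimpleGraph V₁) (Γ₂ : SimpleGraph V₂) (φ : Γ₁ →g Γ₂),
      Γ₁.Connected ∧ Γ₂.Connected ∧
      Nonempty (graphAut Γ₁ ≃* G₁) ∧ Nonempty (graphAut Γ₂ ≃* G₂) ∧
      Nonempty (graphArrowAut Γ₁ Γ₂ ⇑φ ≃* H) := by
  let e₁ : G₁ ≃* graphAut (LabelGadget.graph WellOrderingRel
      (cayleySystem (Sum.inl : G₁ → Label G₁ G₂))) :=
    (MulEquiv.ofBijective _ (cayleyHom_bijective _ Sum.inl_injective)).trans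
      (LabelGadget.graphAutEquiv _ _)
  let e₂ : G₂ ≃* graphAut (LabelGadget.graph WellOrderingRel (cosetSystem H)) :=
    (MulEquiv.ofBijective _ ⟨cosetHom_injective H, cosetHom_surjective H⟩).trans
      (LabelGadget.graphAutEquiv _ _)
  refine ⟨_, _, _, _, LabelGadget.graphHom WellOrderingRel _ (cosetEmbedding_rel H),
    LabelGadget.connected_graph, LabelGadget.connected_graph, ⟨e₁.symm⟩, ⟨e₂.symm⟩,
    nonempty_mulEquiv_of_prodCongr_mem_iff e₁ e₂ fun g k => ?_⟩
  exact (LabelGadget.graphAutEquiv_mem_graphArrowAut_iff _ _ _ _).trans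
    (cayleyHom_cosetHom_mem_relArrowAut_iff H g k)
end

section
/- The map φ₀ : G₁ → V(G_{ι₁}) defined by φ₀(g) = [g] if g ∈ P, and φ₀(g) = s otherwise, is a morphism of I₁-systems from Cay(G₁, R) to G_{ι₁}. -/
universe u

section GoursatSetup

variable {G₁ G₂ : Type u} [Group G₁] [Group G₂]

/-- `π₁(H)`, the projection of `H` to the first factor. -/
def projFst (H : Subgroup (G₁ × G₂)) : Subgroup G₁ := H.map (MonoidHom.fst G₁ G₂)

/-- `π₂(H)`, the projection of `H` to the second factor. -/
def projSnd (H : Subgroup (G₁ × G₂)) : Subgroup G₂ := H.map (MonoidHom.snd G₁ G₂)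

/-- `ι₁⁻¹(H) = {g ∈ G₁ | (g, e) ∈ H}`. -/
def kerFst (H : Subgroup (G₁ × G₂)) : Subgroup G₁ := H.comap (MonoidHom.inl G₁ G₂)

/-- `ι₂⁻¹(H) = {g ∈ G₂ | (e, g) ∈ H}`. -/
def kerSnd (H : Subgroup (G₁ × G₂)) : Subgroup G₂ := H.comap (MonoidHom.inr G₁ G₂)

theorem kerFst_le_projFst (H : Subgroup (G₁ × G₂)) : kerFst H ≤ projFst H :=
  fun g hg => ⟨(g, 1), hg, rfl⟩

theorem kerSnd_le_projSnd (H : Subgroup (G₁ × G₂)) : kerSnd H ≤ projSnd H :=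
  fun g hg => ⟨(1, g), hg, rfl⟩

/-- `ι₁⁻¹(H)` is a normal subgroup of `π₁(H)`. -/
instance kerFst_normal (H : Subgroup (G₁ × G₂)) :
    ((kerFst H).subgroupOf (projFst H)).Normal := by
  constructor
  intro n hn g
  rw [Subgroup.mem_subgroupOf] at hn ⊢
  obtain ⟨x, hxH, hx⟩ := g.2
  have key : x * (((n : G₁), 1) : G₁ × G₂) * x⁻¹ ∈ H :=
    mul_mem (mul_mem hxH hn) (inv_mem hxH)
  have : x * (((n : G₁), 1) : G₁ × G₂) * x⁻¹ = (((g * n * g⁻¹ : projFst H) : G₁), 1) := by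
    ext
    · simp [← hx]
    · simp
  rwa [this] at key

/-- `ι₂⁻¹(H)` is a normal subgroup of `π₂(H)`. -/
instance kerSnd_normal (H : Subgroup (G₁ × G₂)) :
    ((kerSnd H).subgroupOf (projSnd H)).Normal := by
  constructor
  intro n hn g
  rw [Subgroup.mem_subgroupOf] at hn ⊢
  obtain ⟨x, hxH, hx⟩ := g.2
  have key : x * ((1, (n : G₂)) : G₁ × G₂) * x⁻¹ ∈ H :=
    mul_mem (mul_mem hxH hn) (inv_mem hxH)
  have : x * ((1, (n : G₂)) : G₁ × G₂) * x⁻¹ = (1, ((g * n * g⁻¹ : projSnd H) : G₂)) := by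
    ext
    · simp
    · simp [← hx]
  rwa [this] at key

/-- The quotient `V₁ = π₁(H)/ι₁⁻¹(H)`. -/
abbrev QuotFst (H : Subgroup (G₁ × G₂)) := projFst H ⧸ (kerFst H).subgroupOf (projFst H)

/-- The quotient `π₂(H)/ι₂⁻¹(H)`. -/
abbrev QuotSnd (H : Subgroup (G₁ × G₂)) := projSnd H ⧸ (kerSnd H).subgroupOf (projSnd H)

/-- The vertex set of the auxiliary system `G_{ι₁}` : it is `V₁` if `π₁(H) = G₁`
(the extra summand is then empty) and `V₁ ⊔ {s}` otherwise. -/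
abbrev AuxVert (H : Subgroup (G₁ × G₂)) := QuotFst H ⊕ PLift (projFst H ≠ ⊤)

/-- The auxiliary binary relational system `G_{ι₁}` over the label set
`I₁ = I_{ι₁} ⊔ (J₁ \ {0})`. -/
def auxRel (H : Subgroup (G₁ × G₂)) {Iι J₁ : Type u} (j₁0 : J₁) (r : J₁ → G₁) :
    (Iι ⊕ {j : J₁ // j ≠ j₁0}) → AuxVert H → AuxVert H → Prop
  | _,      .inr _, .inr _ => True
  | .inl _, .inl a, .inl b => b = a
  | .inr j, .inl a, .inl b =>
      ∃ h : r j.val ∈ projFst H, b = QuotientGroup.mk ⟨r j.val, h⟩ * a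
  | .inl _, .inl _, .inr _ => False
  | .inl _, .inr _, .inl _ => False
  | .inr j, .inl _, .inr _ => r j.val ∉ projFst H
  | .inr j, .inr _, .inl _ => r j.val ∉ projFst H

/-- The generating family `R = (r_i)_{i ∈ I₁}` of `G₁`. -/
def cayGenFst (H : Subgroup (G₁ × G₂)) {Iι J₁ : Type u} (rι : Iι → kerFst H) (j₁0 : J₁)
    (r : J₁ → G₁) : (Iι ⊕ {j : J₁ // j ≠ j₁0}) → G₁
  | .inl i => (rι i : G₁)
  | .inr j => r j.val

/-- The Cayley diagram `Cay(G₁, R)` as an `I₁`-system. -/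
def cayRelFst (H : Subgroup (G₁ × G₂)) {Iι J₁ : Type u} (rι : Iι → kerFst H) (j₁0 : J₁)
    (r : J₁ → G₁) (i : Iι ⊕ {j : J₁ // j ≠ j₁0}) (g g' : G₁) : Prop :=
  g' = cayGenFst H rι j₁0 r i * g

/-- The map `φ₀ : G₁ → V(G_{ι₁})`, sending `g` to `[g]` if `g ∈ π₁(H)` and to `s`
otherwise. -/
noncomputable def phiZero (H : Subgroup (G₁ × G₂)) (g : G₁) : AuxVert H :=
  letI := Classical.dec (g ∈ projFst H)
  if h : g ∈ projFst H then .inl (QuotientGroup.mk ⟨g, h⟩)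
  else .inr ⟨fun hP => h (by rw [hP]; exact Subgroup.mem_top g)⟩

end GoursatSetup

/-- The map `φ₀ : G₁ → V(G_{ι₁})` (sending `g` to `[g]` if `g ∈ π₁(H)` and to `s`
otherwise) is a morphism of `I₁`-systems from `Cay(G₁, R)` to the auxiliary system
`G_{ι₁}`. -/
theorem phiZero_is_relational_morphism {G₁ G₂ : Type u} [Group G₁] [Group G₂]
    (H : Subgroup (G₁ × G₂)) {Iι J₁ : Type u} (rι : Iι → kerFst H) (j₁0 : J₁) (r : J₁ → G₁)
    (hr0 : r j₁0 = 1)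
    (hcos : ∀ g : G₁, ∃! j : J₁, g * (r j)⁻¹ ∈ kerFst H)
    (hKgen : Subgroup.closure (Set.range fun i => ((rι i : G₁))) = kerFst H) :
    ∀ (i : Iι ⊕ {j : J₁ // j ≠ j₁0}) (g g' : G₁),
      cayRelFst H rι j₁0 r i g g' →
        auxRel H j₁0 r i (phiZero H g) (phiZero H g') := by
  classical
  have hpos : ∀ (g : G₁) (h : g ∈ projFst H),
      phiZero H g = .inl (QuotientGroup.mk ⟨g, h⟩) := by
    intro g h
    simp [phiZero, h]
  have hneg : ∀ (g : G₁), g ∉ projFst H → ∃ x, phiZero H g = .inr x := by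
    intro g h
    simp [phiZero, h]
    exact fun hP => h (hP ▸ Subgroup.mem_top g)
  rintro (i | j) g g' hrel
  · -- kernel generator case
    simp only [cayRelFst, cayGenFst] at hrel
    have hk : (rι i : G₁) ∈ projFst H := kerFst_le_projFst H (rι i).2
    by_cases hg : g ∈ projFst H
    · have hg' : g' ∈ projFst H := hrel ▸ mul_mem hk hg
      rw [hpos g hg, hpos g' hg']
      show QuotientGroup.mk _ = QuotientGroup.mk _
      rw [QuotientGroup.eq]
      have : (⟨g', hg'⟩ : projFst H)⁻¹ * ⟨g, hg⟩
          = (⟨g, hg⟩ : projFst H)⁻¹ * ⟨(rι i : G₁), hk⟩⁻¹ * ⟨g, hg⟩ := by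
        ext; simp [hrel]
      rw [this]
      have hmem : (⟨(rι i : G₁), hk⟩ : projFst H)⁻¹ ∈ (kerFst H).subgroupOf (projFst H) := by
        apply inv_mem
        rw [Subgroup.mem_subgroupOf]
        exact (rι i).2
      have := (kerFst_normal H).conj_mem _ hmem (⟨g, hg⟩ : projFst H)⁻¹
      simpa [mul_assoc] using this
    · have hg' : g' ∉ projFst H := by
        intro hg'
        exact hg (by
          have : g = (rι i : G₁)⁻¹ * g' := by rw [hrel]; group
          rw [this]; exact mul_mem (inv_mem hk) hg')
      obtain ⟨x, hx⟩ := hneg g hg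
      obtain ⟨x', hx'⟩ := hneg g' hg'
      rw [hx, hx']
      trivial
  · -- coset representative case
    simp only [cayRelFst, cayGenFst] at hrel
    by_cases hj : r j.val ∈ projFst H
    · by_cases hg : g ∈ projFst H
      · have hg' : g' ∈ projFst H := hrel ▸ mul_mem hj hg
        rw [hpos g hg, hpos g' hg']
        refine ⟨hj, ?_⟩
        show (QuotientGroup.mk _ : QuotFst H) = (QuotientGroup.mk (⟨r j.val, hj⟩ : projFst H) : QuotFst H) * (QuotientGroup.mk (⟨g, hg⟩ : projFst H) : QuotFst H)
        rw [← QuotientGroup.mk_mul]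
        congr 1
        ext
        exact hrel
      · have hg' : g' ∉ projFst H := by
          intro hg'
          exact hg (by
            have : g = (r j.val)⁻¹ * g' := by rw [hrel]; group
            rw [this]; exact mul_mem (inv_mem hj) hg')
        obtain ⟨x, hx⟩ := hneg g hg
        obtain ⟨x', hx'⟩ := hneg g' hg'
        rw [hx, hx']
        trivial
    · by_cases hg : g ∈ projFst H
      · have hg' : g' ∉ projFst H := by
          intro hg'
          exact hj (by
            have : r j.val = g' * g⁻¹ := by rw [hrel]; group
            rw [this]; exact mul_mem hg' (inv_mem hg))
        obtain ⟨x', hx'⟩ := hneg g' hg'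
        rw [hpos g hg, hx']
        exact hj
      · obtain ⟨x, hx⟩ := hneg g hg
        rw [hx]
        by_cases hg' : g' ∈ projFst H
        · rw [hpos g' hg']
          exact hj
        · obtain ⟨x', hx'⟩ := hneg g' hg'
          rw [hx']
          trivial
end

section
/- The map Φ : G₂ → Aut_I(G₂') sending g̃ to Φ_{g̃} is a group isomorphism; in particular Aut_I(G₂') ≅ G₂. -/
/-!
`Φ` is a left action of `G₂` by automorphisms: on the copies `V₂ʲ` it is governed by the cocycle
identity `k₂(ab) = k₂(a) k₂(s_{j₂(a)} b)` of the factorisation `g = k₂(g) s_{j₂(g)}`. It is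
faithful because `Φ_{g̃}` sends the vertex `1 ∈ G₂` to `g̃⁻¹`.

For surjectivity, an automorphism preserves the set `G₂` of sources of `θ`-edges, so after composing
with some `Φ_{g̃}` it fixes `1`. Each edge used here is the only edge of its label out of (or into)
its endpoint, so an automorphism fixing one endpoint fixes the other. Starting from `1`, this fixes
`G₂` (the `s_i` generate `G₂`), then every `(j, [g])` (each is a `θ`-target), and finally every
`(j, s)`, reached from `(j, [1])` by the edge labelled by some `r_j ∉ π₁(H)`.
-/

universe u

section MainSystem

variable {G₁ G₂ : Type u} [Group G₁] [Group G₂]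

/-- The vertex set of the system `G₂'`: `G₂ ⊔ (⊔_{j ∈ J₂} V₂ʲ)` with
`V₂ʲ = {j} × V(G_{ι₁})`. -/
abbrev MainVert (H : Subgroup (G₁ × G₂)) (J₂ : Type u) := G₂ ⊕ (J₂ × AuxVert H)

/-- The full label set `I = I₁ ⊔ I₂ ⊔ {θ}`. -/
abbrev FullLabel (Iι J₁ Iπ J₂ : Type u) (j₁0 : J₁) (j₂0 : J₂) :=
  (Iι ⊕ {j : J₁ // j ≠ j₁0}) ⊕ ((Iπ ⊕ {j : J₂ // j ≠ j₂0}) ⊕ PUnit.{u + 1})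

/-- The generating family `S = (s_i)_{i ∈ I₂}` of `G₂`. -/
def cayGenSnd (H : Subgroup (G₁ × G₂)) {Iπ J₂ : Type u} (sπ : Iπ → projSnd H) (j₂0 : J₂)
    (s : J₂ → G₂) : (Iπ ⊕ {j : J₂ // j ≠ j₂0}) → G₂
  | .inl i => (sπ i : G₂)
  | .inr j => s j.val

/-- The binary relational system `G₂'` over the label set `I = I₁ ⊔ I₂ ⊔ {θ}`. -/
def mainRel (H : Subgroup (G₁ × G₂)) {Iι J₁ Iπ J₂ : Type u} (j₁0 : J₁) (r : J₁ → G₁)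
    (sπ : Iπ → projSnd H) (j₂0 : J₂) (s : J₂ → G₂)
    (k₂ : G₂ → projSnd H) (jj₂ : G₂ → J₂) (θ : QuotFst H ≃* QuotSnd H) :
    FullLabel Iι J₁ Iπ J₂ j₁0 j₂0 → MainVert H J₂ → MainVert H J₂ → Prop
  | .inl i₁, .inr (j, v), .inr (j', v') => j' = j ∧ auxRel H j₁0 r i₁ v v'
  | .inr (.inl i₂), .inl g, .inl g' => g' = cayGenSnd H sπ j₂0 s i₂ * g
  | .inr (.inr _), .inl g, .inr (j, v) =>
      j = jj₂ g ∧ v = .inl (θ.symm (QuotientGroup.mk (k₂ g)))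
  | _, _, _ => False

/-- The self-map `Φ_{g̃}` of the vertex set of `G₂'` induced by `g̃ ∈ G₂`. -/
def mainPhi (H : Subgroup (G₁ × G₂)) {J₂ : Type u} (s : J₂ → G₂)
    (k₂ : G₂ → projSnd H) (jj₂ : G₂ → J₂) (θ : QuotFst H ≃* QuotSnd H)
    (gt : G₂) : MainVert H J₂ → MainVert H J₂
  | .inl g => .inl (g * gt⁻¹)
  | .inr (j, .inl a) =>
      .inr (jj₂ (s j * gt⁻¹),
        .inl (a * θ.symm (QuotientGroup.mk (k₂ (s j * gt⁻¹)))))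
  | .inr (j, .inr u) => .inr (jj₂ (s j * gt⁻¹), .inr u)

/-- The Cayley diagram `Cay(G₁, R)` viewed as an `I`-system over the full label set,
with no edges of label outside `I₁`. -/
def cayRelFull (H : Subgroup (G₁ × G₂)) {Iι J₁ Iπ J₂ : Type u} (rι : Iι → kerFst H)
    (j₁0 : J₁) (r : J₁ → G₁) (j₂0 : J₂) :
    FullLabel Iι J₁ Iπ J₂ j₁0 j₂0 → G₁ → G₁ → Prop
  | .inl i₁ => fun g g' => g' = cayGenFst H rι j₁0 r i₁ * g
  | .inr _ => fun _ _ => False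

/-- The morphism `φ' : Cay(G₁, R) → G₂'`, `φ'(g) = (0, φ₀(g))`. -/
noncomputable def mainArrow (H : Subgroup (G₁ × G₂)) {J₂ : Type u} (j₂0 : J₂) (g : G₁) :
    MainVert H J₂ :=
  .inr (j₂0, phiZero H g)

end MainSystem

theorem mem_relAut {I V : Type*} {R : I → V → V → Prop} {e : Equiv.Perm V} :
    e ∈ relAut R ↔ ∀ i v w, R i v w ↔ R i (e v) (e w) :=
  Iff.rfl

section RelAut

variable {I V : Type*} {R : I → V → V → Prop} {e : Equiv.Perm V} {i : I} {v w : V}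

theorem apply_eq_self_of_unique_target (he : e ∈ relAut R) (hv : e v = v) (hvw : R i v w)
    (huniq : ∀ w', R i v w' → w' = w) : e w = w :=
  huniq _ (hv ▸ (mem_relAut.1 he i v w).1 hvw)

theorem apply_eq_self_of_unique_source (he : e ∈ relAut R) (hw : e w = w) (hvw : R i v w)
    (huniq : ∀ v', R i v' w → v' = v) : e v = v :=
  huniq _ (hw ▸ (mem_relAut.1 he i v w).1 hvw)

end RelAut

section CosetFactorization

variable {G J : Type*} [Group G] {P : Subgroup G} {s : J → G} {k : G → P} {jj : G → J}

def IsCosetFactorization (P : Subgroup G) (s : J → G) (k : G → P) (jj : G → J) : Prop :=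
  ∀ (g : G) (κ : P) (l : J), (κ : G) * s l = g ↔ κ = k g ∧ l = jj g

namespace IsCosetFactorization

theorem mul_rep_apply (hf : IsCosetFactorization P s k jj) (g : G) : (k g : G) * s (jj g) = g :=
  (hf g _ _).2 ⟨rfl, rfl⟩

theorem apply_mul_rep (hf : IsCosetFactorization P s k jj) (y : P) (j : J) :
    k (y * s j) = y ∧ jj (y * s j) = j :=
  ((hf _ y j).1 rfl).imp Eq.symm Eq.symm

theorem apply_rep (hf : IsCosetFactorization P s k jj) (j : J) : k (s j) = 1 ∧ jj (s j) = j := by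
  simpa using hf.apply_mul_rep 1 j

theorem apply_mul (hf : IsCosetFactorization P s k jj) (a b : G) :
    k (a * b) = k a * k (s (jj a) * b) ∧ jj (a * b) = jj (s (jj a) * b) := by
  refine ((hf (a * b) _ _).1 ?_).imp Eq.symm Eq.symm
  rw [Subgroup.coe_mul, mul_assoc, hf.mul_rep_apply, ← mul_assoc, hf.mul_rep_apply]

end IsCosetFactorization

theorem exists_ne_and_notMem_of_ne_top {K P : Subgroup G} (hKP : K ≤ P) (hP : P ≠ ⊤)
    {r : J → G} {j₀ : J} (hr₀ : r j₀ = 1) (hcos : ∀ g, ∃ j, g * (r j)⁻¹ ∈ K) :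
    ∃ j, j ≠ j₀ ∧ r j ∉ P := by
  obtain ⟨g, hg⟩ : ∃ g, g ∉ P := by
    by_contra! h
    exact hP (P.eq_top_iff'.2 h)
  obtain ⟨j, hj⟩ := hcos g
  have hrj : r j ∉ P := fun hr => hg (by simpa using P.mul_mem (hKP hj) hr)
  exact ⟨j, fun h => hrj (h ▸ hr₀ ▸ P.one_mem), hrj⟩

end CosetFactorization

section MainSystemAut

variable {G₁ G₂ : Type u} [Group G₁] [Group G₂] {H : Subgroup (G₁ × G₂)}
  {Iι J₁ Iπ J₂ : Type u} {j₁0 : J₁} {r : J₁ → G₁} {sπ : Iπ → projSnd H} {j₂0 : J₂}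
  {s : J₂ → G₂} {k₂ : G₂ → projSnd H} {jj₂ : G₂ → J₂} {θ : QuotFst H ≃* QuotSnd H}

theorem closure_range_cayGenSnd (hs0 : s j₂0 = 1)
    (hPgen : Subgroup.closure (Set.range fun i => ((sπ i : G₂))) = projSnd H)
    (hf : IsCosetFactorization (projSnd H) s k₂ jj₂) :
    Subgroup.closure (Set.range (cayGenSnd H sπ j₂0 s)) = ⊤ := by
  refine (Subgroup.eq_top_iff' _).2 fun g => ?_
  rw [← hf.mul_rep_apply g]
  refine Subgroup.mul_mem _ ?_ ?_
  · have hk : (k₂ g : G₂) ∈ Subgroup.closure (Set.range fun i => ((sπ i : G₂))) :=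
      hPgen.symm ▸ (k₂ g).2
    refine Subgroup.closure_mono ?_ hk
    rintro _ ⟨i, rfl⟩
    exact ⟨.inl i, rfl⟩
  · by_cases hj : jj₂ g = j₂0
    · rw [hj, hs0]
      exact Subgroup.one_mem _
    · exact Subgroup.subset_closure ⟨.inr ⟨jj₂ g, hj⟩, rfl⟩

theorem auxRel_map_mul_right {i : Iι ⊕ {j : J₁ // j ≠ j₁0}} {x y : AuxVert H}
    (h : auxRel H j₁0 r i x y) (c : QuotFst H) :
    auxRel H j₁0 r i (Sum.map (· * c) id x) (Sum.map (· * c) id y) := by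
  rcases i with i | i <;> rcases x with a | u <;> rcases y with b | u' <;>
    simp only [auxRel, Sum.map_inl, Sum.map_inr, id] at h ⊢
  · rw [h]
  · obtain ⟨hr, rfl⟩ := h
    exact ⟨hr, mul_assoc _ _ _⟩
  all_goals exact h

theorem mainRel_inl_iff {i : Iι ⊕ {j : J₁ // j ≠ j₁0}} {v w : MainVert H J₂} :
    mainRel H j₁0 r sπ j₂0 s k₂ jj₂ θ (.inl i) v w ↔
      ∃ j x y, v = .inr (j, x) ∧ w = .inr (j, y) ∧ auxRel H j₁0 r i x y := by
  rcases v with g | ⟨j, x⟩ <;> rcases w with g' | ⟨j', y⟩ <;> simp [mainRel, and_comm, eq_comm]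

theorem mainRel_inr_inl_iff {i : Iπ ⊕ {j : J₂ // j ≠ j₂0}} {v w : MainVert H J₂} :
    mainRel H (Iι := Iι) j₁0 r sπ j₂0 s k₂ jj₂ θ (.inr (.inl i)) v w ↔
      ∃ g, v = .inl g ∧ w = .inl (cayGenSnd H sπ j₂0 s i * g) := by
  rcases v with g | ⟨j, x⟩ <;> rcases w with g' | ⟨j', y⟩ <;> simp [mainRel]

theorem mainRel_inr_inr_iff {t : PUnit.{u + 1}} {v w : MainVert H J₂} :
    mainRel H (Iι := Iι) (Iπ := Iπ) j₁0 r sπ j₂0 s k₂ jj₂ θ (.inr (.inr t)) v w ↔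
      ∃ g, v = .inl g ∧ w = .inr (jj₂ g, .inl (θ.symm (QuotientGroup.mk (k₂ g)))) := by
  rcases v with g | ⟨j, x⟩ <;> rcases w with g' | ⟨j', y⟩ <;> simp [mainRel]

theorem mainPhi_inr (gt : G₂) (j : J₂) (x : AuxVert H) :
    mainPhi H s k₂ jj₂ θ gt (.inr (j, x)) = .inr (jj₂ (s j * gt⁻¹),
      Sum.map (· * θ.symm (QuotientGroup.mk (k₂ (s j * gt⁻¹)))) id x) := by
  rcases x with a | u <;> rfl

theorem mainPhi_one (hf : IsCosetFactorization (projSnd H) s k₂ jj₂) (v : MainVert H J₂) :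
    mainPhi H s k₂ jj₂ θ 1 v = v := by
  rcases v with g | ⟨j, a | u⟩ <;> simp [mainPhi, hf.apply_rep]

theorem mainPhi_mul (hf : IsCosetFactorization (projSnd H) s k₂ jj₂) (a b : G₂)
    (v : MainVert H J₂) :
    mainPhi H s k₂ jj₂ θ (a * b) v = mainPhi H s k₂ jj₂ θ a (mainPhi H s k₂ jj₂ θ b v) := by
  rcases v with g | ⟨j, x⟩
  · simp [mainPhi, mul_assoc]
  · obtain ⟨hk, hj⟩ := hf.apply_mul (s j * b⁻¹) a⁻¹
    simp only [mainPhi_inr, mul_inv_rev, ← mul_assoc, hk, hj, Sum.map_map]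
    congr 3
    ext q
    simp [mul_assoc]

theorem mainPhi_inv_mainPhi (hf : IsCosetFactorization (projSnd H) s k₂ jj₂) (gt : G₂)
    (v : MainVert H J₂) : mainPhi H s k₂ jj₂ θ gt⁻¹ (mainPhi H s k₂ jj₂ θ gt v) = v := by
  rw [← mainPhi_mul hf, inv_mul_cancel, mainPhi_one hf]

theorem mainPhi_mainPhi_inv (hf : IsCosetFactorization (projSnd H) s k₂ jj₂) (gt : G₂)
    (v : MainVert H J₂) : mainPhi H s k₂ jj₂ θ gt (mainPhi H s k₂ jj₂ θ gt⁻¹ v) = v := by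
  simpa using mainPhi_inv_mainPhi (θ := θ) hf gt⁻¹ v

theorem mainRel_mainPhi (hf : IsCosetFactorization (projSnd H) s k₂ jj₂) (gt : G₂)
    {i : FullLabel Iι J₁ Iπ J₂ j₁0 j₂0} {v w : MainVert H J₂}
    (h : mainRel H j₁0 r sπ j₂0 s k₂ jj₂ θ i v w) :
    mainRel H j₁0 r sπ j₂0 s k₂ jj₂ θ i (mainPhi H s k₂ jj₂ θ gt v)
      (mainPhi H s k₂ jj₂ θ gt w) := by
  rcases i with i | i | t
  · obtain ⟨j, x, y, rfl, rfl, hxy⟩ := mainRel_inl_iff.1 h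
    simp only [mainPhi_inr]
    exact mainRel_inl_iff.2 ⟨_, _, _, rfl, rfl, auxRel_map_mul_right hxy _⟩
  · obtain ⟨g, rfl, rfl⟩ := mainRel_inr_inl_iff.1 h
    exact mainRel_inr_inl_iff.2 ⟨_, rfl, by simp [mainPhi, mul_assoc]⟩
  · obtain ⟨g, rfl, rfl⟩ := mainRel_inr_inr_iff.1 h
    obtain ⟨hk, hj⟩ := hf.apply_mul g gt⁻¹
    refine mainRel_inr_inr_iff.2 ⟨_, rfl, ?_⟩
    simp [mainPhi, hk, hj]

@[simps]
def mainPhiPerm (hf : IsCosetFactorization (projSnd H) s k₂ jj₂) (gt : G₂) :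
    Equiv.Perm (MainVert H J₂) where
  toFun := mainPhi H s k₂ jj₂ θ gt
  invFun := mainPhi H s k₂ jj₂ θ gt⁻¹
  left_inv := mainPhi_inv_mainPhi hf gt
  right_inv := mainPhi_mainPhi_inv hf gt

theorem mainPhiPerm_mem_relAut (hf : IsCosetFactorization (projSnd H) s k₂ jj₂) (gt : G₂) :
    mainPhiPerm (θ := θ) hf gt ∈ relAut (mainRel H (Iι := Iι) j₁0 r sπ j₂0 s k₂ jj₂ θ) := by
  refine mem_relAut.2 fun i v w => ⟨mainRel_mainPhi hf gt, fun h => ?_⟩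
  simpa only [mainPhiPerm_apply, mainPhi_inv_mainPhi hf] using mainRel_mainPhi hf gt⁻¹ h

def mainPhiHom (hf : IsCosetFactorization (projSnd H) s k₂ jj₂) :
    G₂ →* relAut (mainRel H (Iι := Iι) j₁0 r sπ j₂0 s k₂ jj₂ θ) where
  toFun gt := ⟨mainPhiPerm hf gt, mainPhiPerm_mem_relAut hf gt⟩
  map_one' := Subtype.ext (Equiv.ext (mainPhi_one hf))
  map_mul' a b := Subtype.ext (Equiv.ext (mainPhi_mul hf a b))

theorem mainPhiHom_injective (hf : IsCosetFactorization (projSnd H) s k₂ jj₂) :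
    Function.Injective (mainPhiHom (Iι := Iι) (j₁0 := j₁0) (r := r) (sπ := sπ) (j₂0 := j₂0)
      (θ := θ) hf) := by
  refine (injective_iff_map_eq_one _).2 fun gt h => ?_
  have h1 := congrArg (fun e : relAut _ => (e : Equiv.Perm (MainVert H J₂)) (.inl 1)) h
  simpa [mainPhiHom, mainPhiPerm, mainPhi] using h1

section Rigidity

variable {e : Equiv.Perm (MainVert H J₂)}

theorem mainRelAut_apply_inl_eq_self
    (he : e ∈ relAut (mainRel H (Iι := Iι) j₁0 r sπ j₂0 s k₂ jj₂ θ))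
    (hgen : Subgroup.closure (Set.range (cayGenSnd H sπ j₂0 s)) = ⊤)
    (h1 : e (.inl 1) = .inl 1) (g : G₂) : e (.inl g) = .inl g := by
  have hg : g ∈ Subgroup.closure (Set.range (cayGenSnd H sπ j₂0 s)) := hgen ▸ Subgroup.mem_top g
  induction hg using Subgroup.closure_induction_left with
  | one => exact h1
  | mul_left c hc g _ ih =>
    obtain ⟨i, rfl⟩ := hc
    refine apply_eq_self_of_unique_target he ih (i := .inr (.inl i))
      (mainRel_inr_inl_iff.2 ⟨g, rfl, rfl⟩) fun w hw => ?_
    obtain ⟨g', hg', rfl⟩ := mainRel_inr_inl_iff.1 hw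
    rw [Sum.inl_injective hg']
  | inv_mul_cancel c hc g _ ih =>
    obtain ⟨i, rfl⟩ := hc
    refine apply_eq_self_of_unique_source he ih (i := .inr (.inl i))
      (mainRel_inr_inl_iff.2 ⟨_, rfl, by rw [mul_inv_cancel_left]⟩) fun v hv => ?_
    obtain ⟨g', rfl, hg'⟩ := mainRel_inr_inl_iff.1 hv
    rw [Sum.inl_injective hg', inv_mul_cancel_left]

theorem mainRelAut_apply_inr_inl_eq_self
    (he : e ∈ relAut (mainRel H (Iι := Iι) j₁0 r sπ j₂0 s k₂ jj₂ θ))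
    (hf : IsCosetFactorization (projSnd H) s k₂ jj₂) (hinl : ∀ g, e (.inl g) = .inl g)
    (j : J₂) (q : QuotFst H) : e (.inr (j, .inl q)) = .inr (j, .inl q) := by
  obtain ⟨y, hy⟩ := QuotientGroup.mk_surjective (θ q)
  obtain ⟨hk, hj⟩ := hf.apply_mul_rep y j
  refine apply_eq_self_of_unique_target he (hinl _) (i := .inr (.inr PUnit.unit))
    (mainRel_inr_inr_iff.2 ⟨_, rfl, by rw [hk, hj, hy, θ.symm_apply_apply]⟩) fun w hw => ?_
  obtain ⟨g, hg, rfl⟩ := mainRel_inr_inr_iff.1 hw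
  rw [← Sum.inl_injective hg, hk, hj, hy, θ.symm_apply_apply]

theorem mainRelAut_apply_inr_inr_eq_self
    (he : e ∈ relAut (mainRel H (Iι := Iι) j₁0 r sπ j₂0 s k₂ jj₂ θ))
    (hr0 : r j₁0 = 1) (hcos : ∀ g : G₁, ∃ j : J₁, g * (r j)⁻¹ ∈ kerFst H)
    (hinr : ∀ j q, e (.inr (j, .inl q)) = .inr (j, .inl q)) (j : J₂)
    (t : PLift (projFst H ≠ ⊤)) : e (.inr (j, .inr t)) = .inr (j, .inr t) := by
  obtain ⟨j₁, hj₁, hr⟩ := exists_ne_and_notMem_of_ne_top (kerFst_le_projFst H) t.down hr0 hcos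
  refine apply_eq_self_of_unique_target he (hinr j 1)
    ((mainRel_inl_iff (i := .inr ⟨j₁, hj₁⟩)).2 ⟨j, .inl 1, .inr t, rfl, rfl, hr⟩) fun w hw => ?_
  obtain ⟨j', x, y, hx, rfl, hxy⟩ := mainRel_inl_iff.1 hw
  obtain ⟨rfl, rfl⟩ := Prod.ext_iff.1 (Sum.inr_injective hx)
  rcases y with b | t'
  · exact absurd hxy.1 hr
  · rw [Subsingleton.elim t' t]

theorem mainRelAut_eq_one_of_apply_inl_one
    (he : e ∈ relAut (mainRel H (Iι := Iι) j₁0 r sπ j₂0 s k₂ jj₂ θ))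
    (hf : IsCosetFactorization (projSnd H) s k₂ jj₂)
    (hgen : Subgroup.closure (Set.range (cayGenSnd H sπ j₂0 s)) = ⊤)
    (hr0 : r j₁0 = 1) (hcos : ∀ g : G₁, ∃ j : J₁, g * (r j)⁻¹ ∈ kerFst H)
    (h1 : e (.inl 1) = .inl 1) : e = 1 := by
  have hinl := mainRelAut_apply_inl_eq_self he hgen h1
  have hinr := mainRelAut_apply_inr_inl_eq_self he hf hinl
  ext (g | ⟨j, q | t⟩)
  exacts [hinl g, hinr j q, mainRelAut_apply_inr_inr_eq_self he hr0 hcos hinr j t]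

end Rigidity

theorem mainPhiHom_surjective (hf : IsCosetFactorization (projSnd H) s k₂ jj₂)
    (hgen : Subgroup.closure (Set.range (cayGenSnd H sπ j₂0 s)) = ⊤)
    (hr0 : r j₁0 = 1) (hcos : ∀ g : G₁, ∃ j : J₁, g * (r j)⁻¹ ∈ kerFst H) :
    Function.Surjective (mainPhiHom (Iι := Iι) (j₁0 := j₁0) (r := r) (sπ := sπ) (j₂0 := j₂0)
      (θ := θ) hf) := by
  rintro ⟨e, he⟩
  obtain ⟨g₀, hg₀, -⟩ := mainRel_inr_inr_iff.1 <|
    (mem_relAut.1 he (.inr (.inr PUnit.unit)) _ _).1 (mainRel_inr_inr_iff.2 ⟨1, rfl, rfl⟩)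
  refine ⟨g₀⁻¹, (map_inv _ _).trans (eq_inv_of_mul_eq_one_right (Subtype.ext ?_)).symm⟩
  refine mainRelAut_eq_one_of_apply_inl_one (mul_mem (mainPhiHom hf g₀).2 he) hf hgen hr0 hcos ?_
  simp [mainPhiHom, hg₀, mainPhi]

end MainSystemAut

theorem mainPhi_group_isomorphism_general {G₁ G₂ : Type u} [Group G₁] [Group G₂]
    (H : Subgroup (G₁ × G₂)) {Iι J₁ Iπ J₂ : Type u}
    (j₁0 : J₁) (r : J₁ → G₁)
    (sπ : Iπ → projSnd H) (j₂0 : J₂) (s : J₂ → G₂)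
    (k₂ : G₂ → projSnd H) (jj₂ : G₂ → J₂) (θ : QuotFst H ≃* QuotSnd H)
    (hr0 : r j₁0 = 1)
    (hcos : ∀ g : G₁, ∃! j : J₁, g * (r j)⁻¹ ∈ kerFst H)
    (hs0 : s j₂0 = 1)
    (hPgen : Subgroup.closure (Set.range fun i => ((sπ i : G₂))) = projSnd H)
    (hdec : ∀ g : G₂, (k₂ g : G₂) * s (jj₂ g) = g)
    (huniq : ∀ (g : G₂) (κ : projSnd H) (l : J₂), (κ : G₂) * s l = g → κ = k₂ g ∧ l = jj₂ g)
 :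
    ∃ Φ : G₂ ≃* relAut (mainRel H (Iι := Iι) j₁0 r sπ j₂0 s k₂ jj₂ θ),
      ∀ gt : G₂, ⇑((Φ gt : relAut (mainRel H (Iι := Iι) j₁0 r sπ j₂0 s k₂ jj₂ θ)) :
        Equiv.Perm (MainVert H J₂)) = mainPhi H s k₂ jj₂ θ gt := by
  have hf : IsCosetFactorization (projSnd H) s k₂ jj₂ := fun g κ l =>
    ⟨huniq g κ l, by rintro ⟨rfl, rfl⟩; exact hdec g⟩
  have hgen := closure_range_cayGenSnd hs0 hPgen hf
  refine ⟨MulEquiv.ofBijective (mainPhiHom hf) ⟨mainPhiHom_injective hf, ?_⟩, fun _ => rfl⟩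
  exact mainPhiHom_surjective hf hgen hr0 fun g => (hcos g).exists

/-- The map `Φ : G₂ → Aut_I(G₂')`, `g̃ ↦ Φ_{g̃}`, is a group isomorphism; in particular
`Aut_I(G₂') ≅ G₂`. -/
theorem mainPhi_group_isomorphism {G₁ G₂ : Type u} [Group G₁] [Group G₂]
    (H : Subgroup (G₁ × G₂)) {Iι J₁ Iπ J₂ : Type u}
    (rι : Iι → kerFst H) (j₁0 : J₁) (r : J₁ → G₁)
    (sπ : Iπ → projSnd H) (j₂0 : J₂) (s : J₂ → G₂)
    (k₂ : G₂ → projSnd H) (jj₂ : G₂ → J₂) (θ : QuotFst H ≃* QuotSnd H)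
    (hr0 : r j₁0 = 1)
    (hcos : ∀ g : G₁, ∃! j : J₁, g * (r j)⁻¹ ∈ kerFst H)
    (hKgen : Subgroup.closure (Set.range fun i => ((rι i : G₁))) = kerFst H)
    (hs0 : s j₂0 = 1)
    (hPgen : Subgroup.closure (Set.range fun i => ((sπ i : G₂))) = projSnd H)
    (hdec : ∀ g : G₂, (k₂ g : G₂) * s (jj₂ g) = g)
    (huniq : ∀ (g : G₂) (κ : projSnd H) (l : J₂), (κ : G₂) * s l = g → κ = k₂ g ∧ l = jj₂ g)
    (hθ : ∀ (x : projFst H) (y : projSnd H),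
      θ (QuotientGroup.mk x) = QuotientGroup.mk y ↔ ((x : G₁), (y : G₂)) ∈ H)
 :
    ∃ Φ : G₂ ≃* relAut (mainRel H (Iι := Iι) j₁0 r sπ j₂0 s k₂ jj₂ θ),
      ∀ gt : G₂, ⇑((Φ gt : relAut (mainRel H (Iι := Iι) j₁0 r sπ j₂0 s k₂ jj₂ θ)) :
        Equiv.Perm (MainVert H J₂)) = mainPhi H s k₂ jj₂ θ gt :=
  mainPhi_group_isomorphism_general H j₁0 r sπ j₂0 s k₂ jj₂ θ hr0 hcos hs0 hPgen hdec huniq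
end

section
/- In the I-system Cay(G₁, R), every vertex has degree 2·|I₁|. In the I-system G₂': every vertex g ∈ G₂ has degree 2·|I₂| + 1; every vertex of the form (j, [g₁]) with [g₁] ∈ V₁ has degree 2·|I₁| + |ι₂⁻¹(H)|; and every vertex of the form (j, s), when it exists, has degree equal to the degree of s in G_{ι₁}, which is at least 2·|I₁|. (All degrees and |·| are cardinalities.) -/
universe u

/-- The outdegree of a vertex in a binary relational system: the cardinality of the
disjoint union over the labels `i ∈ I` of the sets `{w | (v, w) ∈ R_i}`. -/
def relOutDeg {I V : Type u} (R : I → V → V → Prop) (v : V) : Cardinal.{u} :=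
  Cardinal.mk (Σ i : I, {w : V // R i v w})

/-- The indegree of a vertex in a binary relational system: the cardinality of the
disjoint union over the labels `i ∈ I` of the sets `{w | (w, v) ∈ R_i}`. -/
def relInDeg {I V : Type u} (R : I → V → V → Prop) (v : V) : Cardinal.{u} :=
  Cardinal.mk (Σ i : I, {w : V // R i w v})

/-- The degree of a vertex in a binary relational system. -/
def relDeg {I V : Type u} (R : I → V → V → Prop) (v : V) : Cardinal.{u} :=
  relOutDeg R v + relInDeg R v



namespace DegHelpers

/-- distribute a sigma over a sum index -/
def sumSigma {α β : Type u} (F : α ⊕ β → Type u) :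
    (Σ i : α ⊕ β, F i) ≃ (Σ a : α, F (Sum.inl a)) ⊕ (Σ b : β, F (Sum.inr b)) where
  toFun x := match x with
    | ⟨.inl a, y⟩ => .inl ⟨a, y⟩
    | ⟨.inr b, y⟩ => .inr ⟨b, y⟩
  invFun x := match x with
    | .inl ⟨a, y⟩ => ⟨.inl a, y⟩
    | .inr ⟨b, y⟩ => ⟨.inr b, y⟩
  left_inv := by rintro ⟨(a | b), y⟩ <;> rfl
  right_inv := by rintro (⟨a, y⟩ | ⟨b, y⟩) <;> rfl

lemma mk_sum' (α β : Type u) : Cardinal.mk (α ⊕ β) = Cardinal.mk α + Cardinal.mk β := by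
  simp [Cardinal.mk_sum]

lemma mk_sigma_sum {α β : Type u} (F : α ⊕ β → Type u) :
    Cardinal.mk (Σ i : α ⊕ β, F i)
      = Cardinal.mk (Σ a : α, F (Sum.inl a)) + Cardinal.mk (Σ b : β, F (Sum.inr b)) :=
  (Cardinal.mk_congr (sumSigma F)).trans (mk_sum' _ _)

lemma mk_sigma_one {I : Type u} (F : I → Type u) (h : ∀ i, Cardinal.mk (F i) = 1) :
    Cardinal.mk (Σ i, F i) = Cardinal.mk I := by
  rw [Cardinal.mk_sigma]
  simp only [h]
  rw [Cardinal.sum_const', mul_one]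

lemma mk_sigma_unique {I : Type u} (F : I → Type u)
    (h1 : ∀ i, Nonempty (F i)) (h2 : ∀ i, Subsingleton (F i)) :
    Cardinal.mk (Σ i, F i) = Cardinal.mk I :=
  mk_sigma_one F fun i => Cardinal.eq_one_iff_unique.2 ⟨h2 i, h1 i⟩

lemma mk_sigma_empty {I : Type u} (F : I → Type u) (h : ∀ i, IsEmpty (F i)) :
    Cardinal.mk (Σ i, F i) = 0 := by
  have : IsEmpty (Σ i, F i) := ⟨fun x => (h x.1).false x.2⟩
  exact Cardinal.mk_eq_zero _

lemma mk_sigma_punit (F : PUnit.{u+1} → Type u) :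
    Cardinal.mk (Σ i, F i) = Cardinal.mk (F PUnit.unit) :=
  Cardinal.mk_congr
    { toFun := fun x => x.2
      invFun := fun y => ⟨PUnit.unit, y⟩
      left_inv := by rintro ⟨⟨⟩, y⟩; rfl
      right_inv := fun y => rfl }

end DegHelpers

section DegreeProofs
open DegHelpers

variable {G₁ G₂ : Type u} [Group G₁] [Group G₂] (H : Subgroup (G₁ × G₂))
  {Iι J₁ Iπ J₂ : Type u} (rι : Iι → kerFst H) (j₁0 : J₁) (r : J₁ → G₁)
  (sπ : Iπ → projSnd H) (j₂0 : J₂) (s : J₂ → G₂)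
  (k₂ : G₂ → projSnd H) (jj₂ : G₂ → J₂) (θ : QuotFst H ≃* QuotSnd H)

lemma plift_subsing : Subsingleton (PLift (projFst H ≠ ⊤)) :=
  ⟨by rintro ⟨a⟩ ⟨b⟩; rfl⟩

/-- each out-fiber of the auxiliary system at a quotient vertex is a singleton -/
lemma aux_out_one (i : Iι ⊕ {j : J₁ // j ≠ j₁0}) (a : QuotFst H) :
    Cardinal.mk {v : AuxVert H // auxRel H j₁0 r i (Sum.inl a) v} = 1 := by
  rw [Cardinal.eq_one_iff_unique]
  constructor
  · constructor
    rintro ⟨vb, hb⟩ ⟨vc, hc⟩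
    apply Subtype.ext
    match i, vb, vc, hb, hc with
    | .inl i, .inl b, .inl c, hb, hc =>
      exact congrArg Sum.inl ((hb : b = a).trans (hc : c = a).symm)
    | .inl i, .inl b, .inr w, hb, hc => exact hc.elim
    | .inl i, .inr w, .inl c, hb, hc => exact hb.elim
    | .inl i, .inr w, .inr w', hb, hc =>
      exact congrArg Sum.inr ((plift_subsing H).allEq w w')
    | .inr jx, .inl b, .inl c, hb, hc =>
      obtain ⟨h1, e1⟩ := hb
      obtain ⟨h2, e2⟩ := hc
      exact congrArg Sum.inl (e1.trans e2.symm)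
    | .inr jx, .inl b, .inr w, hb, hc => exact absurd hb.choose hc
    | .inr jx, .inr w, .inl c, hb, hc => exact absurd hc.choose hb
    | .inr jx, .inr w, .inr w', hb, hc =>
      exact congrArg Sum.inr ((plift_subsing H).allEq w w')
  · match i with
    | .inl i => exact ⟨⟨Sum.inl a, rfl⟩⟩
    | .inr jx =>
      by_cases hP : r jx.val ∈ projFst H
      · exact ⟨⟨Sum.inl (QuotientGroup.mk ⟨r jx.val, hP⟩ * a), hP, rfl⟩⟩
      · exact ⟨⟨Sum.inr ⟨fun ht => hP (by rw [ht]; exact Subgroup.mem_top _)⟩, hP⟩⟩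

/-- each in-fiber of the auxiliary system at a quotient vertex is a singleton -/
lemma aux_in_one (i : Iι ⊕ {j : J₁ // j ≠ j₁0}) (a : QuotFst H) :
    Cardinal.mk {v : AuxVert H // auxRel H j₁0 r i v (Sum.inl a)} = 1 := by
  rw [Cardinal.eq_one_iff_unique]
  constructor
  · constructor
    rintro ⟨vb, hb⟩ ⟨vc, hc⟩
    apply Subtype.ext
    match i, vb, vc, hb, hc with
    | .inl i, .inl b, .inl c, hb, hc =>
      exact congrArg Sum.inl ((hb : a = b).symm.trans (hc : a = c))
    | .inl i, .inl b, .inr w, hb, hc => exact hc.elim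
    | .inl i, .inr w, .inl c, hb, hc => exact hb.elim
    | .inl i, .inr w, .inr w', hb, hc =>
      exact congrArg Sum.inr ((plift_subsing H).allEq w w')
    | .inr jx, .inl b, .inl c, hb, hc =>
      obtain ⟨h1, e1⟩ := hb
      obtain ⟨h2, e2⟩ := hc
      exact congrArg Sum.inl (mul_left_cancel (e1.symm.trans e2))
    | .inr jx, .inl b, .inr w, hb, hc => exact absurd hb.choose hc
    | .inr jx, .inr w, .inl c, hb, hc => exact absurd hc.choose hb
    | .inr jx, .inr w, .inr w', hb, hc =>
      exact congrArg Sum.inr ((plift_subsing H).allEq w w')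
  · match i with
    | .inl i => exact ⟨⟨Sum.inl a, rfl⟩⟩
    | .inr jx =>
      by_cases hP : r jx.val ∈ projFst H
      · exact ⟨⟨Sum.inl ((QuotientGroup.mk ⟨r jx.val, hP⟩)⁻¹ * a), hP,
          (mul_inv_cancel_left _ _).symm⟩⟩
      · exact ⟨⟨Sum.inr ⟨fun ht => hP (by rw [ht]; exact Subgroup.mem_top _)⟩, hP⟩⟩

/-- the out-fibers at a vertex `(j, v₀)` for an `I₁`-label agree with those of the
auxiliary system -/
def fiberOutEquiv (i₁ : Iι ⊕ {j : J₁ // j ≠ j₁0}) (j : J₂) (v₀ : AuxVert H) :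
    {w : MainVert H J₂ //
        mainRel H j₁0 r sπ j₂0 s k₂ jj₂ θ (.inl i₁) (.inr (j, v₀)) w} ≃
    {v : AuxVert H // auxRel H j₁0 r i₁ v₀ v} where
  toFun w := match w with
    | ⟨.inl _, hw⟩ => ((hw : False).elim)
    | ⟨.inr (j', v), hw⟩ => ⟨v, (hw : j' = j ∧ auxRel H j₁0 r i₁ v₀ v).2⟩
  invFun v := ⟨.inr (j, v.1), ⟨rfl, v.2⟩⟩
  left_inv := by
    rintro ⟨(g | ⟨j', v⟩), hw⟩
    · exact (hw : False).elim
    · have h1 : j' = j := (hw : j' = j ∧ _).1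
      subst h1
      rfl
  right_inv v := rfl

/-- the in-fibers at a vertex `(j, v₀)` for an `I₁`-label agree with those of the
auxiliary system -/
def fiberInEquiv (i₁ : Iι ⊕ {j : J₁ // j ≠ j₁0}) (j : J₂) (v₀ : AuxVert H) :
    {w : MainVert H J₂ //
        mainRel H j₁0 r sπ j₂0 s k₂ jj₂ θ (.inl i₁) w (.inr (j, v₀))} ≃
    {v : AuxVert H // auxRel H j₁0 r i₁ v v₀} where
  toFun w := match w with
    | ⟨.inl _, hw⟩ => ((hw : False).elim)
    | ⟨.inr (j', v), hw⟩ => ⟨v, (hw : j = j' ∧ auxRel H j₁0 r i₁ v v₀).2⟩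
  invFun v := ⟨.inr (j, v.1), ⟨rfl, v.2⟩⟩
  left_inv := by
    rintro ⟨(g | ⟨j', v⟩), hw⟩
    · exact (hw : False).elim
    · have h1 : j = j' := (hw : j = j' ∧ _).1
      subst h1
      rfl
  right_inv v := rfl

/-- the θ-in-fiber at a vertex `(j, [a])` is in bijection with `ι₂⁻¹(H)` -/
lemma mk_theta_fiber (j : J₂) (a : QuotFst H)
    (hdec : ∀ g : G₂, (k₂ g : G₂) * s (jj₂ g) = g)
    (huniq : ∀ (g : G₂) (κ : projSnd H) (l : J₂),
      (κ : G₂) * s l = g → κ = k₂ g ∧ l = jj₂ g) :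
    Cardinal.mk {w : MainVert H J₂ //
        mainRel H (Iι := Iι) j₁0 r sπ j₂0 s k₂ jj₂ θ (.inr (.inr PUnit.unit)) w
          (.inr (j, Sum.inl a))}
      = Cardinal.mk (kerSnd H) := by
  obtain ⟨y, hy⟩ := QuotientGroup.mk_surjective (s := (kerSnd H).subgroupOf (projSnd H)) (θ a)
  -- first reduce to a subtype of G₂
  have e1 : {w : MainVert H J₂ //
        mainRel H (Iι := Iι) j₁0 r sπ j₂0 s k₂ jj₂ θ (.inr (.inr PUnit.unit)) w
          (.inr (j, Sum.inl a))} ≃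
      {g : G₂ // j = jj₂ g ∧
        (Sum.inl a : AuxVert H) = Sum.inl (θ.symm (QuotientGroup.mk (k₂ g)))} :=
    { toFun := fun w => match w with
        | ⟨.inl g, hw⟩ => ⟨g, hw⟩
        | ⟨.inr _, hw⟩ => ((hw : False).elim)
      invFun := fun g => ⟨.inl g.1, g.2⟩
      left_inv := by
        rintro ⟨(g | p), hw⟩
        · rfl
        · exact (hw : False).elim
      right_inv := fun g => rfl }
  rw [Cardinal.mk_congr e1]
  refine Cardinal.mk_congr ⟨fun g => ⟨(y : G₂)⁻¹ * ((k₂ g.1 : G₂)), ?_⟩,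
    fun n => ⟨(y : G₂) * (n : G₂) * s j, ?_, ?_⟩, ?_, ?_⟩
  · -- membership in kerSnd H
    obtain ⟨g, h1, h2⟩ := g
    have ha : a = θ.symm (QuotientGroup.mk (k₂ g)) := by
      injection h2
    have : QuotientGroup.mk (s := (kerSnd H).subgroupOf (projSnd H)) y
        = QuotientGroup.mk (k₂ g) := by
      rw [hy, ha, MulEquiv.apply_symm_apply]
    have hmem : y⁻¹ * k₂ g ∈ (kerSnd H).subgroupOf (projSnd H) :=
      QuotientGroup.eq.mp this
    rw [Subgroup.mem_subgroupOf] at hmem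
    simpa using hmem
  · -- j = jj₂ g
    have hmul : ((y * ⟨(n : G₂), kerSnd_le_projSnd H n.2⟩ : projSnd H) : G₂) * s j
        = (y : G₂) * (n : G₂) * s j := by
      push_cast; ring_nf
    exact (huniq _ _ _ hmul).2
  · -- the θ condition
    have hmul : ((y * ⟨(n : G₂), kerSnd_le_projSnd H n.2⟩ : projSnd H) : G₂) * s j
        = (y : G₂) * (n : G₂) * s j := by
      push_cast; ring_nf
    have hk : (y * ⟨(n : G₂), kerSnd_le_projSnd H n.2⟩ : projSnd H)
        = k₂ ((y : G₂) * (n : G₂) * s j) := (huniq _ _ _ hmul).1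
    have hq : QuotientGroup.mk (s := (kerSnd H).subgroupOf (projSnd H))
        (y * ⟨(n : G₂), kerSnd_le_projSnd H n.2⟩) = QuotientGroup.mk y := by
      rw [QuotientGroup.eq]
      simpa [Subgroup.mem_subgroupOf] using n.2
    rw [← hk, hq, hy, MulEquiv.symm_apply_apply]
  · -- left inverse
    rintro ⟨g, h1, h2⟩
    apply Subtype.ext
    have ha : a = θ.symm (QuotientGroup.mk (k₂ g)) := by injection h2
    show (y : G₂) * ((y : G₂)⁻¹ * (k₂ g : G₂)) * s j = g
    rw [mul_inv_cancel_left, h1]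
    exact hdec g
  · -- right inverse
    intro n
    apply Subtype.ext
    have hmul : ((y * ⟨(n : G₂), kerSnd_le_projSnd H n.2⟩ : projSnd H) : G₂) * s j
        = (y : G₂) * (n : G₂) * s j := by
      push_cast; ring_nf
    have hk : (y * ⟨(n : G₂), kerSnd_le_projSnd H n.2⟩ : projSnd H)
        = k₂ ((y : G₂) * (n : G₂) * s j) := (huniq _ _ _ hmul).1
    show (y : G₂)⁻¹ * ((k₂ ((y : G₂) * (n : G₂) * s j) : G₂)) = (n : G₂)
    rw [← hk]
    push_cast
    group

end DegreeProofs

/-- Degrees of the vertices in the `I`-systems `Cay(G₁, R)` and `G₂'`: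
every vertex of `Cay(G₁, R)` has degree `2|I₁|`; in `G₂'`, a vertex `g ∈ G₂` has degree
`2|I₂| + 1`, a vertex `(j, [g₁])` has degree `2|I₁| + |ι₂⁻¹(H)|`, and a vertex `(j, s)`
(when it exists) has the same degree as `s` in `G_{ι₁}`, which is at least `2|I₁|`. -/
theorem degrees_of_vertices {G₁ G₂ : Type u} [Group G₁] [Group G₂]
    (H : Subgroup (G₁ × G₂)) {Iι J₁ Iπ J₂ : Type u}
    (rι : Iι → kerFst H) (j₁0 : J₁) (r : J₁ → G₁)
    (sπ : Iπ → projSnd H) (j₂0 : J₂) (s : J₂ → G₂)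
    (k₂ : G₂ → projSnd H) (jj₂ : G₂ → J₂) (θ : QuotFst H ≃* QuotSnd H)
    (hr0 : r j₁0 = 1)
    (hcos : ∀ g : G₁, ∃! j : J₁, g * (r j)⁻¹ ∈ kerFst H)
    (hKgen : Subgroup.closure (Set.range fun i => ((rι i : G₁))) = kerFst H)
    (hs0 : s j₂0 = 1)
    (hPgen : Subgroup.closure (Set.range fun i => ((sπ i : G₂))) = projSnd H)
    (hdec : ∀ g : G₂, (k₂ g : G₂) * s (jj₂ g) = g)
    (huniq : ∀ (g : G₂) (κ : projSnd H) (l : J₂), (κ : G₂) * s l = g → κ = k₂ g ∧ l = jj₂ g)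
    (hθ : ∀ (x : projFst H) (y : projSnd H),
      θ (QuotientGroup.mk x) = QuotientGroup.mk y ↔ ((x : G₁), (y : G₂)) ∈ H)
 :
    (∀ g : G₁, relDeg (cayRelFull H (Iπ := Iπ) rι j₁0 r j₂0) g
      = 2 * Cardinal.mk (Iι ⊕ {j : J₁ // j ≠ j₁0})) ∧
    (∀ g : G₂, relDeg (mainRel H (Iι := Iι) j₁0 r sπ j₂0 s k₂ jj₂ θ) (Sum.inl g)
      = 2 * Cardinal.mk (Iπ ⊕ {j : J₂ // j ≠ j₂0}) + 1) ∧
    (∀ (j : J₂) (a : QuotFst H),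
      relDeg (mainRel H (Iι := Iι) j₁0 r sπ j₂0 s k₂ jj₂ θ) (Sum.inr (j, Sum.inl a))
        = 2 * Cardinal.mk (Iι ⊕ {j : J₁ // j ≠ j₁0}) + Cardinal.mk (kerSnd H)) ∧
    (∀ (j : J₂) (u : PLift (projFst H ≠ ⊤)),
      relDeg (mainRel H (Iι := Iι) j₁0 r sπ j₂0 s k₂ jj₂ θ) (Sum.inr (j, Sum.inr u))
        = relDeg (auxRel H (Iι := Iι) j₁0 r) (Sum.inr u) ∧
      2 * Cardinal.mk (Iι ⊕ {j : J₁ // j ≠ j₁0})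
        ≤ relDeg (auxRel H (Iι := Iι) j₁0 r) (Sum.inr u)) := by
  refine ⟨?_, ?_, ?_, ?_⟩
  -- Part 1 : the Cayley diagram
  · intro g
    have hout : relOutDeg (cayRelFull H (Iπ := Iπ) rι j₁0 r j₂0) g
        = Cardinal.mk (Iι ⊕ {j : J₁ // j ≠ j₁0}) := by
      unfold relOutDeg
      rw [DegHelpers.mk_sigma_sum]
      have e1 : Cardinal.mk (Σ i₁ : Iι ⊕ {j : J₁ // j ≠ j₁0},
          {w : G₁ // cayRelFull H (Iπ := Iπ) rι j₁0 r j₂0 (Sum.inl i₁) g w})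
          = Cardinal.mk (Iι ⊕ {j : J₁ // j ≠ j₁0}) := by
        apply DegHelpers.mk_sigma_unique
        · exact fun i₁ => ⟨⟨cayGenFst H rι j₁0 r i₁ * g, rfl⟩⟩
        · intro i₁
          constructor
          rintro ⟨w1, e1⟩ ⟨w2, e2⟩
          exact Subtype.ext ((e1 : w1 = _).trans (e2 : w2 = _).symm)
      have e2 : Cardinal.mk (Σ i₂ : (Iπ ⊕ {j : J₂ // j ≠ j₂0}) ⊕ PUnit.{u+1},
          {w : G₁ // cayRelFull H (Iπ := Iπ) rι j₁0 r j₂0 (Sum.inr i₂) g w}) = 0 := by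
        apply DegHelpers.mk_sigma_empty
        exact fun i₂ => ⟨fun x => (x.2 : False)⟩
      rw [e1, e2, add_zero]
    have hin : relInDeg (cayRelFull H (Iπ := Iπ) rι j₁0 r j₂0) g
        = Cardinal.mk (Iι ⊕ {j : J₁ // j ≠ j₁0}) := by
      unfold relInDeg
      rw [DegHelpers.mk_sigma_sum]
      have e1 : Cardinal.mk (Σ i₁ : Iι ⊕ {j : J₁ // j ≠ j₁0},
          {w : G₁ // cayRelFull H (Iπ := Iπ) rι j₁0 r j₂0 (Sum.inl i₁) w g})
          = Cardinal.mk (Iι ⊕ {j : J₁ // j ≠ j₁0}) := by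
        apply DegHelpers.mk_sigma_unique
        · exact fun i₁ => ⟨⟨(cayGenFst H rι j₁0 r i₁)⁻¹ * g,
            (mul_inv_cancel_left _ _).symm⟩⟩
        · intro i₁
          constructor
          rintro ⟨w1, e1⟩ ⟨w2, e2⟩
          exact Subtype.ext (mul_left_cancel ((e1 : g = _).symm.trans (e2 : g = _)))
      have e2 : Cardinal.mk (Σ i₂ : (Iπ ⊕ {j : J₂ // j ≠ j₂0}) ⊕ PUnit.{u+1},
          {w : G₁ // cayRelFull H (Iπ := Iπ) rι j₁0 r j₂0 (Sum.inr i₂) w g}) = 0 := by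
        apply DegHelpers.mk_sigma_empty
        exact fun i₂ => ⟨fun x => (x.2 : False)⟩
      rw [e1, e2, add_zero]
    unfold relDeg
    rw [hout, hin, two_mul]
  -- Part 2 : vertices g ∈ G₂
  · intro g
    have hout : relOutDeg (mainRel H (Iι := Iι) j₁0 r sπ j₂0 s k₂ jj₂ θ) (Sum.inl g)
        = Cardinal.mk (Iπ ⊕ {j : J₂ // j ≠ j₂0}) + 1 := by
      unfold relOutDeg
      rw [DegHelpers.mk_sigma_sum]
      have e1 : Cardinal.mk (Σ i₁ : Iι ⊕ {j : J₁ // j ≠ j₁0},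
          {w : MainVert H J₂ //
            mainRel H (Iι := Iι) j₁0 r sπ j₂0 s k₂ jj₂ θ (Sum.inl i₁) (Sum.inl g) w}) = 0 := by
        apply DegHelpers.mk_sigma_empty
        intro i₁
        constructor
        rintro ⟨(w | ⟨j', v⟩), hw⟩ <;> exact (hw : False)
      rw [e1, zero_add, DegHelpers.mk_sigma_sum]
      have e2 : Cardinal.mk (Σ i₂ : Iπ ⊕ {j : J₂ // j ≠ j₂0},
          {w : MainVert H J₂ //
            mainRel H (Iι := Iι) j₁0 r sπ j₂0 s k₂ jj₂ θ (Sum.inr (Sum.inl i₂)) (Sum.inl g) w})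
          = Cardinal.mk (Iπ ⊕ {j : J₂ // j ≠ j₂0}) := by
        apply DegHelpers.mk_sigma_unique
        · exact fun i₂ => ⟨⟨Sum.inl (cayGenSnd H sπ j₂0 s i₂ * g), rfl⟩⟩
        · intro i₂
          constructor
          rintro ⟨(w1 | p1), h1⟩ ⟨(w2 | p2), h2⟩
          · exact Subtype.ext (congrArg Sum.inl ((h1 : w1 = _).trans (h2 : w2 = _).symm))
          · exact (h2 : False).elim
          · exact (h1 : False).elim
          · exact (h1 : False).elim
      have e3 : Cardinal.mk (Σ pu : PUnit.{u+1},
          {w : MainVert H J₂ //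
            mainRel H (Iι := Iι) j₁0 r sπ j₂0 s k₂ jj₂ θ (Sum.inr (Sum.inr pu)) (Sum.inl g) w})
          = 1 := by
        rw [DegHelpers.mk_sigma_punit, Cardinal.eq_one_iff_unique]
        constructor
        · constructor
          rintro ⟨(w1 | ⟨j1, v1⟩), h1⟩ ⟨(w2 | ⟨j2, v2⟩), h2⟩
          · exact (h1 : False).elim
          · exact (h1 : False).elim
          · exact (h2 : False).elim
          · obtain ⟨ha1, hb1⟩ := (h1 : j1 = jj₂ g ∧ v1 = _)
            obtain ⟨ha2, hb2⟩ := (h2 : j2 = jj₂ g ∧ v2 = _)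
            subst ha1; subst hb1; subst ha2; subst hb2
            rfl
        · exact ⟨⟨Sum.inr (jj₂ g, Sum.inl (θ.symm (QuotientGroup.mk (k₂ g)))), rfl, rfl⟩⟩
      rw [e2, e3]
    have hin : relInDeg (mainRel H (Iι := Iι) j₁0 r sπ j₂0 s k₂ jj₂ θ) (Sum.inl g)
        = Cardinal.mk (Iπ ⊕ {j : J₂ // j ≠ j₂0}) := by
      unfold relInDeg
      rw [DegHelpers.mk_sigma_sum]
      have e1 : Cardinal.mk (Σ i₁ : Iι ⊕ {j : J₁ // j ≠ j₁0},
          {w : MainVert H J₂ //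
            mainRel H (Iι := Iι) j₁0 r sπ j₂0 s k₂ jj₂ θ (Sum.inl i₁) w (Sum.inl g)}) = 0 := by
        apply DegHelpers.mk_sigma_empty
        intro i₁
        constructor
        rintro ⟨(w | ⟨j', v⟩), hw⟩ <;> exact (hw : False)
      rw [e1, zero_add, DegHelpers.mk_sigma_sum]
      have e2 : Cardinal.mk (Σ i₂ : Iπ ⊕ {j : J₂ // j ≠ j₂0},
          {w : MainVert H J₂ //
            mainRel H (Iι := Iι) j₁0 r sπ j₂0 s k₂ jj₂ θ (Sum.inr (Sum.inl i₂)) w (Sum.inl g)})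
          = Cardinal.mk (Iπ ⊕ {j : J₂ // j ≠ j₂0}) := by
        apply DegHelpers.mk_sigma_unique
        · exact fun i₂ => ⟨⟨Sum.inl ((cayGenSnd H sπ j₂0 s i₂)⁻¹ * g),
            (mul_inv_cancel_left _ _).symm⟩⟩
        · intro i₂
          constructor
          rintro ⟨(w1 | p1), h1⟩ ⟨(w2 | p2), h2⟩
          · exact Subtype.ext (congrArg Sum.inl
              (mul_left_cancel ((h1 : g = _).symm.trans (h2 : g = _))))
          · exact (h2 : False).elim
          · exact (h1 : False).elim
          · exact (h1 : False).elim
      have e3 : Cardinal.mk (Σ pu : PUnit.{u+1},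
          {w : MainVert H J₂ //
            mainRel H (Iι := Iι) j₁0 r sπ j₂0 s k₂ jj₂ θ (Sum.inr (Sum.inr pu)) w (Sum.inl g)})
          = 0 := by
        apply DegHelpers.mk_sigma_empty
        intro pu
        constructor
        rintro ⟨(w | ⟨j', v⟩), hw⟩ <;> exact (hw : False)
      rw [e2, e3, add_zero]
    unfold relDeg
    rw [hout, hin]
    ring
  -- Part 3 : vertices (j, [a])
  · intro j a
    have hout : relOutDeg (mainRel H (Iι := Iι) j₁0 r sπ j₂0 s k₂ jj₂ θ)
        (Sum.inr (j, Sum.inl a)) = Cardinal.mk (Iι ⊕ {j : J₁ // j ≠ j₁0}) := by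
      unfold relOutDeg
      rw [DegHelpers.mk_sigma_sum]
      have e1 : Cardinal.mk (Σ i₁ : Iι ⊕ {j : J₁ // j ≠ j₁0},
          {w : MainVert H J₂ //
            mainRel H (Iι := Iι) j₁0 r sπ j₂0 s k₂ jj₂ θ (Sum.inl i₁)
              (Sum.inr (j, Sum.inl a)) w})
          = Cardinal.mk (Iι ⊕ {j : J₁ // j ≠ j₁0}) := by
        rw [Cardinal.mk_congr (Equiv.sigmaCongrRight fun i₁ =>
          fiberOutEquiv H j₁0 r sπ j₂0 s k₂ jj₂ θ i₁ j (Sum.inl a))]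
        exact DegHelpers.mk_sigma_one _ fun i₁ => aux_out_one H j₁0 r i₁ a
      have e2 : Cardinal.mk (Σ i₂ : (Iπ ⊕ {j : J₂ // j ≠ j₂0}) ⊕ PUnit.{u+1},
          {w : MainVert H J₂ //
            mainRel H (Iι := Iι) j₁0 r sπ j₂0 s k₂ jj₂ θ (Sum.inr i₂)
              (Sum.inr (j, Sum.inl a)) w}) = 0 := by
        apply DegHelpers.mk_sigma_empty
        rintro (i₂ | pu) <;>
          (constructor; rintro ⟨(w | ⟨j', v⟩), hw⟩ <;> exact (hw : False))
      rw [e1, e2, add_zero]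
    have hin : relInDeg (mainRel H (Iι := Iι) j₁0 r sπ j₂0 s k₂ jj₂ θ)
        (Sum.inr (j, Sum.inl a))
        = Cardinal.mk (Iι ⊕ {j : J₁ // j ≠ j₁0}) + Cardinal.mk (kerSnd H) := by
      unfold relInDeg
      rw [DegHelpers.mk_sigma_sum]
      have e1 : Cardinal.mk (Σ i₁ : Iι ⊕ {j : J₁ // j ≠ j₁0},
          {w : MainVert H J₂ //
            mainRel H (Iι := Iι) j₁0 r sπ j₂0 s k₂ jj₂ θ (Sum.inl i₁)
              w (Sum.inr (j, Sum.inl a))})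
          = Cardinal.mk (Iι ⊕ {j : J₁ // j ≠ j₁0}) := by
        rw [Cardinal.mk_congr (Equiv.sigmaCongrRight fun i₁ =>
          fiberInEquiv H j₁0 r sπ j₂0 s k₂ jj₂ θ i₁ j (Sum.inl a))]
        exact DegHelpers.mk_sigma_one _ fun i₁ => aux_in_one H j₁0 r i₁ a
      rw [e1, DegHelpers.mk_sigma_sum]
      have e2 : Cardinal.mk (Σ i₂ : Iπ ⊕ {j : J₂ // j ≠ j₂0},
          {w : MainVert H J₂ //
            mainRel H (Iι := Iι) j₁0 r sπ j₂0 s k₂ jj₂ θ (Sum.inr (Sum.inl i₂))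
              w (Sum.inr (j, Sum.inl a))}) = 0 := by
        apply DegHelpers.mk_sigma_empty
        intro i₂
        constructor
        rintro ⟨(w | ⟨j', v⟩), hw⟩ <;> exact (hw : False)
      have e3 : Cardinal.mk (Σ pu : PUnit.{u+1},
          {w : MainVert H J₂ //
            mainRel H (Iι := Iι) j₁0 r sπ j₂0 s k₂ jj₂ θ (Sum.inr (Sum.inr pu))
              w (Sum.inr (j, Sum.inl a))}) = Cardinal.mk (kerSnd H) := by
        rw [DegHelpers.mk_sigma_punit]
        exact mk_theta_fiber H j₁0 r sπ j₂0 s k₂ jj₂ θ j a hdec huniq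
      rw [e2, e3, zero_add]
    unfold relDeg
    rw [hout, hin]
    ring
  -- Part 4 : vertices (j, s)
  · intro j u
    have hout : relOutDeg (mainRel H (Iι := Iι) j₁0 r sπ j₂0 s k₂ jj₂ θ)
        (Sum.inr (j, Sum.inr u)) = relOutDeg (auxRel H (Iι := Iι) j₁0 r) (Sum.inr u) := by
      unfold relOutDeg
      rw [DegHelpers.mk_sigma_sum]
      have e2 : Cardinal.mk (Σ i₂ : (Iπ ⊕ {j : J₂ // j ≠ j₂0}) ⊕ PUnit.{u+1},
          {w : MainVert H J₂ //
            mainRel H (Iι := Iι) j₁0 r sπ j₂0 s k₂ jj₂ θ (Sum.inr i₂)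
              (Sum.inr (j, Sum.inr u)) w}) = 0 := by
        apply DegHelpers.mk_sigma_empty
        rintro (i₂ | pu) <;>
          (constructor; rintro ⟨(w | ⟨j', v⟩), hw⟩ <;> exact (hw : False))
      rw [e2, add_zero]
      exact Cardinal.mk_congr (Equiv.sigmaCongrRight fun i₁ =>
        fiberOutEquiv H j₁0 r sπ j₂0 s k₂ jj₂ θ i₁ j (Sum.inr u))
    have hin : relInDeg (mainRel H (Iι := Iι) j₁0 r sπ j₂0 s k₂ jj₂ θ)
        (Sum.inr (j, Sum.inr u)) = relInDeg (auxRel H (Iι := Iι) j₁0 r) (Sum.inr u) := by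
      unfold relInDeg
      rw [DegHelpers.mk_sigma_sum]
      have e2 : Cardinal.mk (Σ i₂ : (Iπ ⊕ {j : J₂ // j ≠ j₂0}) ⊕ PUnit.{u+1},
          {w : MainVert H J₂ //
            mainRel H (Iι := Iι) j₁0 r sπ j₂0 s k₂ jj₂ θ (Sum.inr i₂)
              w (Sum.inr (j, Sum.inr u))}) = 0 := by
        apply DegHelpers.mk_sigma_empty
        rintro (i₂ | pu)
        · constructor
          rintro ⟨(w | ⟨j', v⟩), hw⟩ <;> exact (hw : False)
        · constructor
          rintro ⟨(w | ⟨j', v⟩), hw⟩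
          · exact Sum.inr_ne_inl (hw : j = jj₂ w ∧ _).2
          · exact (hw : False)
      rw [e2, add_zero]
      exact Cardinal.mk_congr (Equiv.sigmaCongrRight fun i₁ =>
        fiberInEquiv H j₁0 r sπ j₂0 s k₂ jj₂ θ i₁ j (Sum.inr u))
    constructor
    · unfold relDeg
      rw [hout, hin]
    · rw [two_mul]
      unfold relDeg
      apply add_le_add
      · exact Cardinal.mk_le_of_injective
          (f := fun i₁ : Iι ⊕ {j : J₁ // j ≠ j₁0} =>
            (⟨i₁, ⟨Sum.inr u, by cases i₁ <;> trivial⟩⟩ :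
              Σ i : Iι ⊕ {j : J₁ // j ≠ j₁0},
                {v : AuxVert H // auxRel H j₁0 r i (Sum.inr u) v}))
          fun x y h => congrArg Sigma.fst h
      · exact Cardinal.mk_le_of_injective
          (f := fun i₁ : Iι ⊕ {j : J₁ // j ≠ j₁0} =>
            (⟨i₁, ⟨Sum.inr u, by cases i₁ <;> trivial⟩⟩ :
              Σ i : Iι ⊕ {j : J₁ // j ≠ j₁0},
                {v : AuxVert H // auxRel H j₁0 r i v (Sum.inr u)}))
          fun x y h => congrArg Sigma.fst h
end

section
/- For every integer n ≥ 1 and every m ∈ {180n² − 40n − 88, 180n² − 46n − 92, 180n² − 52n − 96}, there exist no nonnegative integers α and β such that (30n + 18)·α + (36n + 22)·β = m. -/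
/-!
Write `a = 30n + 18`, `b = 36n + 22` and `s = 5α + 6β`. Since `6a < 5b`, the quotient `m / s` is a
mediant of `a / 5` and `b / 6`, so `6m / b ≤ s ≤ 5m / a`. For the three values of `m` this interval
lies strictly between the consecutive integers `30n − 25 − j` and `30n − 24 − j` (`j = 0, 1, 2`),
so it contains no integer `s`.
-/

theorem mul_add_mul_bounds_of_mul_le {R : Type*} [CommRing R] [LinearOrder R]
    [IsStrictOrderedRing R] {a b u v α β : R} (hα : 0 ≤ α) (hβ : 0 ≤ β) (h : a * v ≤ b * u) :
    a * (u * α + v * β) ≤ u * (a * α + b * β) ∧ v * (a * α + b * β) ≤ b * (u * α + v * β) := by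
  have hd : 0 ≤ b * u - a * v := sub_nonneg.2 h
  constructor
  · linear_combination mul_nonneg hd hβ
  · linear_combination mul_nonneg hd hα

theorem not_exists_nonneg_solution_of_gap {a b u v m k : ℤ} (ha : 0 ≤ a) (hb : 0 < b)
    (h : a * v ≤ b * u) (hlow : b * k < v * m) (hhigh : u * m < a * (k + 1)) :
    ¬ ∃ α β : ℤ, 0 ≤ α ∧ 0 ≤ β ∧ a * α + b * β = m := by
  rintro ⟨α, β, hα, hβ, rfl⟩
  obtain ⟨hs_le, le_hs⟩ := mul_add_mul_bounds_of_mul_le hα hβ h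
  have hk : k + 1 ≤ u * α + v * β := lt_of_mul_lt_mul_left (hlow.trans_le le_hs) hb.le
  linarith [mul_le_mul_of_nonneg_left hk ha]

theorem not_exists_nonneg_solution_family (n j : ℤ) (hn : 0 ≤ n) (hj₀ : 0 ≤ j) (hj : j ≤ 10) :
    ¬ ∃ α β : ℤ, 0 ≤ α ∧ 0 ≤ β ∧
      (30 * n + 18) * α + (36 * n + 22) * β = 180 * n ^ 2 - (40 + 6 * j) * n - (88 + 4 * j) :=
  not_exists_nonneg_solution_of_gap (u := 5) (v := 6) (k := 30 * n - 25 - j)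
    (by linarith) (by linarith) (by linarith) (by nlinarith) (by nlinarith)

/-- For every integer `n ≥ 1` and every
`m ∈ {180n² − 40n − 88, 180n² − 46n − 92, 180n² − 52n − 96}`, there are no nonnegative
integers `α`, `β` with `(30n + 18)·α + (36n + 22)·β = m`. -/
theorem no_solutions_degree_xv (n : ℤ) (hn : 1 ≤ n)
    (m : ℤ) (hm : m = 180 * n ^ 2 - 40 * n - 88 ∨ m = 180 * n ^ 2 - 46 * n - 92 ∨
      m = 180 * n ^ 2 - 52 * n - 96) :
    ¬ ∃ α β : ℤ, 0 ≤ α ∧ 0 ≤ β ∧ (30 * n + 18) * α + (36 * n + 22) * β = m := by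
  obtain ⟨j, hj₀, hj, rfl⟩ : ∃ j : ℤ, 0 ≤ j ∧ j ≤ 2 ∧
      m = 180 * n ^ 2 - (40 + 6 * j) * n - (88 + 4 * j) := by
    rcases hm with rfl | rfl | rfl
    exacts [⟨0, le_rfl, by norm_num, by ring⟩, ⟨1, by norm_num, by norm_num, by ring⟩,
      ⟨2, by norm_num, le_rfl, by ring⟩]
  exact not_exists_nonneg_solution_family n j (by linarith) hj₀ (by linarith)
end

section
/- For every integer n ≥ 1, every j ∈ {1, 2, 3} and every t ∈ {0, 1, 2}, there exist no nonnegative integers α and β such that (30n + 18)·α + (36n + 22)·β = (540n² + 654n + 197) − d_j − t·(180n² + 218n + 66), where d₁ = 126n + 75, d₂ = 132n + 79 and d₃ = 138n + 83. -/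
/-!
Halving the equation, it reads `(15n + 9)α + (18n + 11)β = m`. Since
`5(18n + 11) - 6(15n + 9) = 1`, the integer `k = 5α + 6β` of a solution with `α, β ≥ 0`
satisfies `6m / (18n + 11) ≤ k ≤ 5m / (15n + 9)`, and for the nine values of `m` in
question this interval lies strictly between two consecutive integers.
-/

/-- A solution would put the integer `u α + v β` in `[v m / b, u m / a] ⊆ (q, q + 1)`. -/
theorem not_exists_nonneg_solution_of_lt_of_lt {a b u v m q : ℤ} (ha : 0 < a) (hb : 0 < b)
    (huv : u * b - v * a = 1) (hq : b * q < v * m) (hq' : u * m < a * (q + 1)) :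
    ¬ ∃ α β : ℤ, 0 ≤ α ∧ 0 ≤ β ∧ a * α + b * β = m := by
  rintro ⟨α, β, hα, hβ, rfl⟩
  have hb_mul : b * (u * α + v * β) = v * (a * α + b * β) + α := by linear_combination α * huv
  have ha_mul : a * (u * α + v * β) = u * (a * α + b * β) - β := by linear_combination -β * huv
  have hlt : q < u * α + v * β := lt_of_mul_lt_mul_left (by linarith) hb.le
  have hlt' : u * α + v * β < q + 1 := lt_of_mul_lt_mul_left (by linarith) ha.le
  omega

theorem not_exists_nonneg_solution (n j t : ℤ) (hn : 0 ≤ n) (hj : 0 ≤ j) (hj' : j ≤ 2)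
    (ht : 0 ≤ t) :
    ¬ ∃ α β : ℤ, 0 ≤ α ∧ 0 ≤ β ∧ (15 * n + 9) * α + (18 * n + 11) * β =
      270 * n ^ 2 + 264 * n + 61 - j * (3 * n + 2) - t * (90 * n ^ 2 + 109 * n + 33) := by
  have htn : 0 ≤ t * (5 * n + 3) := mul_nonneg ht (by linarith)
  -- With `q` below and `m` the right-hand side, `6m - (18n + 11)q = 3 - j` and `(15n + 9)(q + 1) - 5m = 1 + j + t(5n + 3)`.
  exact not_exists_nonneg_solution_of_lt_of_lt (u := 5) (v := 6)
    (q := 90 * n + 33 - j - t * (30 * n + 18)) (by linarith) (by linarith) (by ring)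
    (by linarith) (by linarith)

/-- For every integer `n ≥ 1`, every `j ∈ {1, 2, 3}` and every `t ∈ {0, 1, 2}`, there are
no nonnegative integers `α`, `β` with
`(30n + 18)·α + (36n + 22)·β = (540n² + 654n + 197) − d_j − t·(180n² + 218n + 66)`,
where `d₁ = 126n + 75`, `d₂ = 132n + 79` and `d₃ = 138n + 83`. -/
theorem no_solutions_degree_z (n : ℤ) (hn : 1 ≤ n)
    (d : ℤ) (hd : d = 126 * n + 75 ∨ d = 132 * n + 79 ∨ d = 138 * n + 83)
    (t : ℤ) (ht : t = 0 ∨ t = 1 ∨ t = 2) :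
    ¬ ∃ α β : ℤ, 0 ≤ α ∧ 0 ≤ β ∧ (30 * n + 18) * α + (36 * n + 22) * β =
      (540 * n ^ 2 + 654 * n + 197) - d - t * (180 * n ^ 2 + 218 * n + 66) := by
  rintro ⟨α, β, hα, hβ, heq⟩
  obtain ⟨j, hj, hj', rfl⟩ : ∃ j : ℤ, 0 ≤ j ∧ j ≤ 2 ∧ d = 126 * n + 75 + j * (6 * n + 4) := by
    rcases hd with rfl | rfl | rfl
    exacts [⟨0, by norm_num, by norm_num, by ring⟩, ⟨1, by norm_num, by norm_num, by ring⟩,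
      ⟨2, by norm_num, by norm_num, by ring⟩]
  refine not_exists_nonneg_solution n j t (by linarith) hj hj' (by omega)
    ⟨α, β, hα, hβ, mul_left_cancel₀ two_ne_zero ?_⟩
  linear_combination heq
end
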